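/- arXiv:2408.07409 — 8 statements merged into one kernel-verified Lean document; each statement's English description precedes it below -/
import Mathlib

section
/- Let X be a locally compact Hausdorff space such that X = K ∪ D for some compact set K and some discrete subspace D. Then there exists a compact open set K' ⊇ K; in particular, X is a topological sum of a compact space K' and a discrete space X \ K'. -/
open TopologicalSpace Metric Set

noncomputable section

/-- `F` is usco: upper semicontinuous with nonempty compact values. -/
def IsUsco {X Y : Type*} [TopologicalSpace X] [TopologicalSpace Y] (F : X → Set Y) : Prop :=
  (∀ x, (F x).Nonempty) ∧ (∀ x, IsCompact (F x)) ∧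
    ∀ x, ∀ V : Set Y, IsOpen V → F x ⊆ V →
      ∃ U : Set X, IsOpen U ∧ x ∈ U ∧ ∀ x' ∈ U, F x' ⊆ V

/-- `F` is minimal usco: minimal w.r.t. inclusion (of graphs) among usco maps. -/
def IsMinimalUsco {X Y : Type*} [TopologicalSpace X] [TopologicalSpace Y] (F : X → Set Y) : Prop :=
  IsUsco F ∧ ∀ G : X → Set Y, IsUsco G → (∀ x, G x ⊆ F x) → G = F

/-- The space `MU(X,Y)` of minimal usco maps from `X` to `Y`, as a subspace of the space of all
maps `X → K(Y)` with the uniformity of uniform convergence on compact sets, where the hyperspace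
`K(Y)` of nonempty compact subsets of `Y` carries the Hausdorff metric. -/
def MU (X Y : Type*) [TopologicalSpace X] [MetricSpace Y] : Type _ :=
  {F : UniformOnFun X (NonemptyCompacts Y) {K : Set X | IsCompact K} //
    IsMinimalUsco (fun x => ((UniformOnFun.toFun {K : Set X | IsCompact K} F) x : Set Y))}

instance (X Y : Type*) [TopologicalSpace X] [MetricSpace Y] : UniformSpace (MU X Y) :=
  inferInstanceAs (UniformSpace
    {F : UniformOnFun X (NonemptyCompacts Y) {K : Set X | IsCompact K} //
      IsMinimalUsco (fun x => ((UniformOnFun.toFun {K : Set X | IsCompact K} F) x : Set Y))})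

instance (X Y : Type*) [TopologicalSpace X] [MetricSpace Y] : TopologicalSpace (MU X Y) :=
  (inferInstance : UniformSpace (MU X Y)).toTopologicalSpace

/-- The underlying multifunction of a minimal usco map. -/
def MU.toFun {X Y : Type*} [TopologicalSpace X] [MetricSpace Y] (F : MU X Y) : X → Set Y :=
  fun x => ((UniformOnFun.toFun {K : Set X | IsCompact K} F.val) x : Set Y)

/-- The value of a minimal usco map at a point, as a nonempty compact subset of `Y`. -/
def MU.val' {X Y : Type*} [TopologicalSpace X] [MetricSpace Y] (F : MU X Y) (x : X) :
    NonemptyCompacts Y :=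
  UniformOnFun.toFun {K : Set X | IsCompact K} F.val x

/-- `D₂(X,Y)`: the minimal usco maps whose total image has at most two points. -/
def D2 (X Y : Type*) [TopologicalSpace X] [MetricSpace Y] : Set (MU X Y) :=
  {F | (⋃ x, F.toFun x).encard ≤ 2}

/-- A space is locally σ-compact if every point has a σ-compact neighborhood. -/
def LocallySigmaCompact (Z : Type*) [TopologicalSpace Z] : Prop :=
  ∀ z : Z, ∃ s ∈ nhds z, IsSigmaCompact s

end


lemma discrete_of_isolated {X : Type*} [TopologicalSpace X] {s : Set X}
    (h : ∀ x ∈ s, IsOpen ({x} : Set X)) : DiscreteTopology ↥s := by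
  rw [discreteTopology_iff_isOpen_singleton]
  intro a
  have h2 : IsOpen (Subtype.val ⁻¹' ({(a : X)} : Set X) : Set ↥s) :=
    (h a a.2).preimage continuous_subtype_val
  convert h2 using 1
  ext b
  simp [Subtype.ext_iff]

/-- If a locally compact Hausdorff space is the union of a compact set and a discrete set, then
there is a compact open set `K' ⊇ K`; in particular `X` is the topological sum of the compact
space `K'` and the discrete space `X \ K'`. -/
theorem statement1 {X : Type*} [TopologicalSpace X] [T2Space X] [LocallyCompactSpace X]
    (K D : Set X) (hK : IsCompact K) (hD : DiscreteTopology ↥D) (hcover : K ∪ D = Set.univ) :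
    ∃ K' : Set X, K ⊆ K' ∧ IsCompact K' ∧ IsOpen K' ∧ IsClosed K' ∧
      DiscreteTopology ↥(K'ᶜ) := by
  have isolated : ∀ x : X, x ∉ K → IsOpen ({x} : Set X) := by
    intro x hx
    have hxD : x ∈ D := by
      have hxu : x ∈ K ∪ D := hcover.symm ▸ Set.mem_univ x
      exact hxu.resolve_left hx
    have hs : IsOpen ({⟨x, hxD⟩} : Set ↥D) := isOpen_discrete _
    rw [isOpen_induced_iff] at hs
    obtain ⟨V, hV, hVeq⟩ := hs
    have : ({x} : Set X) = V ∩ Kᶜ := by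
      ext y
      constructor
      · intro hy
        rw [Set.mem_singleton_iff] at hy
        have hxv : (⟨x, hxD⟩ : ↥D) ∈ Subtype.val ⁻¹' V := by rw [hVeq]; rfl
        exact ⟨hy ▸ (hxv : x ∈ V), hy ▸ hx⟩
      · rintro ⟨hyV, hyK⟩
        have hyD : y ∈ D := by
          have : y ∈ K ∪ D := hcover.symm ▸ Set.mem_univ y
          exact this.resolve_left hyK
        have : (⟨y, hyD⟩ : ↥D) ∈ Subtype.val ⁻¹' V := hyV
        rw [hVeq] at this
        simpa using congrArg Subtype.val this
    rw [this]
    exact hV.inter hK.isClosed.isOpen_compl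
  obtain ⟨C, hCcomp, hKC⟩ := exists_compact_superset hK
  set U := interior C with hU
  have hUopen : IsOpen U := isOpen_interior
  set L := closure U with hL
  have hLC : L ⊆ C := closure_minimal interior_subset hCcomp.isClosed
  have hLcomp : IsCompact L := hCcomp.of_isClosed_subset isClosed_closure hLC
  have hFcomp : IsCompact (L \ U) := hLcomp.diff hUopen
  have hFiso : ∀ x ∈ L \ U, IsOpen ({x} : Set X) := fun x hx =>
    isolated x (fun hxK => hx.2 (hKC hxK))
  have hLopen : IsOpen L := by
    have hLeq : L = U ∪ ⋃ x ∈ L \ U, {x} := by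
      simp only [Set.biUnion_of_singleton]
      rw [Set.union_diff_cancel' (le_refl U) subset_closure]
    rw [hLeq]
    exact hUopen.union (isOpen_biUnion hFiso)
  refine ⟨L, hKC.trans subset_closure, hLcomp, hLopen, isClosed_closure, ?_⟩
  exact discrete_of_isolated fun x hx =>
    isolated x fun hxK => hx ((hKC.trans subset_closure) hxK)
end

section
/- Let X be a locally compact Hausdorff space and (Y,d) a metric space. The set D₂(X,Y) of minimal usco maps from X to Y whose total image has at most 2 points is closed in the space MU(X,Y) of minimal usco maps equipped with the topology of uniform convergence on compact sets. -/
open TopologicalSpace Metric Set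

/-! Having at least `n + 1` points in the total image is an open condition: it is witnessed by
`n + 1` evaluations `F ↦ F(x)` meeting `n + 1` pairwise disjoint open sets, evaluations are
continuous into the hyperspace, and meeting an open set is open in the Vietoris topology, which
Mathlib's Hausdorff-metric topology on `NonemptyCompacts` is by construction. -/

open Function Filter Topology

theorem Pairwise.enatCard_le_encard_of_inter_nonempty {α ι : Type*} {U : ι → Set α}
    (hU : Pairwise (Disjoint on U)) {S : Set α} (hS : ∀ i, (S ∩ U i).Nonempty) :
    ENat.card ι ≤ S.encard := by
  choose p hpS hpU using hS
  have hp : Injective p := fun i j hij =>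
    by_contra fun hne => (hU hne).ne_of_mem (hpU i) (hpU j) hij
  exact hp.encard_range.trans (encard_le_encard (range_subset_iff.2 hpS))

theorem isOpen_setOf_lt_encard_iUnion {T X Y : Type*} [TopologicalSpace T] [TopologicalSpace Y]
    [T2Space Y] {f : T → X → NonemptyCompacts Y} (hf : ∀ x, Continuous fun t => f t x)
    (n : ℕ) :
    IsOpen {t | (n : ℕ∞) < (⋃ x, (f t x : Set Y)).encard} := by
  refine isOpen_iff_mem_nhds.2 fun t₀ ht₀ => ?_
  obtain ⟨s, hsub, hs⟩ := exists_subset_encard_eq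
    ((ENat.add_one_le_iff (ENat.natCast_ne_top n)).2 ht₀)
  have : Finite s := (finite_of_encard_eq_coe (k := n + 1) (by exact_mod_cast hs)).to_subtype
  have hsep : Pairwise (Disjoint on fun y : s => 𝓝 (y : Y)) :=
    pairwise_disjoint_nhds.comp_of_injective Subtype.val_injective
  obtain ⟨U, hU, hdisj⟩ :=
    hsep.exists_mem_filter_basis_of_disjoint fun y : s => nhds_basis_opens (y : Y)
  choose x hx using fun y : s => mem_iUnion.1 (hsub y.2)
  have hnhds : ∀ y : s, {t | ((f t (x y) : Set Y) ∩ U y).Nonempty} ∈ 𝓝 t₀ := fun y =>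
    ((NonemptyCompacts.isOpen_inter_nonempty_of_isOpen (hU y).2).preimage (hf (x y))).mem_nhds
      ⟨y, hx y, (hU y).1⟩
  filter_upwards [iInter_mem.2 hnhds] with t ht
  have hcard := hdisj.enatCard_le_encard_of_inter_nonempty (S := ⋃ x, (f t x : Set Y))
    fun y => (mem_iInter.1 ht y).mono (inter_subset_inter_left _ (subset_iUnion _ _))
  rw [ENat.card_coe_set_eq, hs] at hcard
  exact (ENat.add_one_le_iff (ENat.natCast_ne_top n)).1 hcard

theorem MU.continuous_val' {X Y : Type*} [TopologicalSpace X] [MetricSpace Y] (x : X) :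
    Continuous fun F : MU X Y => F.val' x :=
  ((UniformOnFun.uniformContinuous_eval_of_mem _ _ (mem_singleton x) isCompact_singleton).comp
    uniformContinuous_subtype_val).continuous

theorem statement3_general {X Y : Type*} [TopologicalSpace X] [MetricSpace Y] : IsClosed (D2 X Y) := by
  have hopen :=
    isOpen_setOf_lt_encard_iUnion (f := fun F : MU X Y => F.val') MU.continuous_val' 2
  have hclosed := hopen.isClosed_compl
  simp only [compl_ofPred, not_lt, Nat.cast_ofNat] at hclosed
  exact hclosed

/-- `D₂(X,Y)` is closed in `MU(X,Y)`. -/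
theorem statement3 {X Y : Type*} [TopologicalSpace X] [T2Space X] [LocallyCompactSpace X]
    [MetricSpace Y] : IsClosed (D2 X Y) :=
  statement3_general
end

section
/- Let X be a locally compact Hausdorff space, Y a Hausdorff space, and suppose X is a topological sum of X₁ and X₂. Then the space MU(X,Y) of minimal usco maps with the topology of uniform convergence on compact sets is homeomorphic to MU(X₁,Y) × MU(X₂,Y), via the map F ↦ (F↾X₁, F↾X₂). -/
open TopologicalSpace Metric Set

/-!
Minimal usconess is a local property along a clopen partition `X = A ⊔ Aᶜ`: a multifunction on `X`
is minimal usco iff its restrictions to `A` and to `Aᶜ` are, so restriction is a bijection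
`MU(X,Y) ≃ MU(A,Y) × MU(Aᶜ,Y)` with inverse given by gluing. Since `A` and `Aᶜ` are closed, every
compact subset of `X` splits into a compact subset of `A` and one of `Aᶜ`; hence uniform
convergence on compacta of `X` is uniform convergence on compacta of `A` and of `Aᶜ` together,
which makes the bijection a homeomorphism.
-/

open Set Topology UniformConvergence

section Usco

variable {X Y : Type*} [TopologicalSpace X] [TopologicalSpace Y] {A : Set X} {F : X → Set Y}

theorem IsUsco.restrict (hF : IsUsco F) (A : Set X) : IsUsco (A.domRestrict F) := by
  obtain ⟨hne, hcpt, husc⟩ := hF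
  refine ⟨fun a => hne a, fun a => hcpt a, fun a V hV hFV => ?_⟩
  obtain ⟨U, hU, haU, hUV⟩ := husc a V hV hFV
  exact ⟨((↑) : A → X) ⁻¹' U, hU.preimage continuous_subtype_val, haU, fun x hx => hUV x hx⟩

theorem exists_isOpen_forall_subset_of_isUsco_restrict (hA : IsOpen A)
    (hF : IsUsco (A.domRestrict F)) {x : X} (hx : x ∈ A) {V : Set Y} (hV : IsOpen V)
    (hFV : F x ⊆ V) : ∃ U : Set X, IsOpen U ∧ x ∈ U ∧ ∀ x' ∈ U, F x' ⊆ V := by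
  obtain ⟨U, hU, hxU, hUV⟩ := hF.2.2 ⟨x, hx⟩ V hV hFV
  refine ⟨(↑) '' U, hA.isOpenMap_subtype_val U hU, ⟨_, hxU, rfl⟩, ?_⟩
  rintro _ ⟨a, ha, rfl⟩
  exact hUV a ha

theorem isUsco_iff_restrict_and_restrict_compl (hA : IsClopen A) :
    IsUsco F ↔ IsUsco (A.domRestrict F) ∧ IsUsco (Aᶜ.domRestrict F) := by
  refine ⟨fun hF => ⟨hF.restrict A, hF.restrict Aᶜ⟩, fun ⟨h₁, h₂⟩ => ?_⟩
  refine ⟨fun x => ?_, fun x => ?_, fun x V hV hFV => ?_⟩ <;> by_cases hx : x ∈ A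
  · exact h₁.1 ⟨x, hx⟩
  · exact h₂.1 ⟨x, hx⟩
  · exact h₁.2.1 ⟨x, hx⟩
  · exact h₂.2.1 ⟨x, hx⟩
  · exact exists_isOpen_forall_subset_of_isUsco_restrict hA.isOpen h₁ hx hV hFV
  · exact exists_isOpen_forall_subset_of_isUsco_restrict hA.compl.isOpen h₂ hx hV hFV

theorem IsMinimalUsco.restrict (hA : IsClopen A) (hF : IsMinimalUsco F) :
    IsMinimalUsco (A.domRestrict F) := by
  refine ⟨hF.1.restrict A, fun G hG hGF => ?_⟩
  classical
  -- Replace `F` by `G` on `A`: the result is usco below `F`, hence equal to `F`.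
  set H : X → Set Y := fun x => if h : x ∈ A then G ⟨x, h⟩ else F x
  have hHA : A.domRestrict H = G := funext fun a => dif_pos a.2
  have hHAc : Aᶜ.domRestrict H = Aᶜ.domRestrict F := funext fun a => dif_neg a.2
  have hH : IsUsco H := (isUsco_iff_restrict_and_restrict_compl hA).2
    ⟨hHA ▸ hG, hHAc ▸ hF.1.restrict Aᶜ⟩
  have hHF : ∀ x, H x ⊆ F x := fun x =>
    if hx : x ∈ A then (dif_pos hx).trans_subset (hGF ⟨x, hx⟩) else (dif_neg hx).subset
  rw [← hHA, hF.2 H hH hHF]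

theorem isMinimalUsco_iff_restrict_and_restrict_compl (hA : IsClopen A) :
    IsMinimalUsco F ↔ IsMinimalUsco (A.domRestrict F) ∧ IsMinimalUsco (Aᶜ.domRestrict F) := by
  refine ⟨fun hF => ⟨hF.restrict hA, hF.restrict hA.compl⟩, fun ⟨h₁, h₂⟩ => ?_⟩
  refine ⟨(isUsco_iff_restrict_and_restrict_compl hA).2 ⟨h₁.1, h₂.1⟩, fun G hG hGF => ?_⟩
  have hGA : A.domRestrict G = A.domRestrict F := h₁.2 _ (hG.restrict A) fun a => hGF a
  have hGAc : Aᶜ.domRestrict G = Aᶜ.domRestrict F := h₂.2 _ (hG.restrict Aᶜ) fun a => hGF a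
  funext x
  by_cases hx : x ∈ A
  · exact congrFun hGA ⟨x, hx⟩
  · exact congrFun hGAc ⟨x, hx⟩

end Usco

namespace UniformOnFun

theorem isUniformInducing_restrict_prod_restrict_compl {X β : Type*} [TopologicalSpace X]
    [UniformSpace β] {A : Set X} (hA : IsClopen A) :
    IsUniformInducing fun f : X →ᵤ[{K | IsCompact K}] β =>
      (ofFun {K : Set A | IsCompact K} (toFun _ f ∘ (↑)),
        ofFun {K : Set ↥Aᶜ | IsCompact K} (toFun _ f ∘ (↑))) := by
  rw [isUniformInducing_iff_uniformSpace, instUniformSpaceProd, UniformSpace.comap_inf,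
    ← UniformSpace.comap_comap, ← UniformSpace.comap_comap]
  refine (uniformSpace_eq_inf_precomp_of_cover (β := β) (𝔖 := {K | IsCompact K})
    (φ₁ := ((↑) : A → X)) (φ₂ := ((↑) : ↥Aᶜ → X))
    (𝔗₁ := {K | IsCompact K}) (𝔗₂ := {K | IsCompact K})
    (h_image₁ := fun K (hK : IsCompact K) => hK.image continuous_subtype_val)
    (h_image₂ := fun K (hK : IsCompact K) => hK.image continuous_subtype_val)
    (h_preimage₁ := fun K (hK : IsCompact K) =>
      hA.isClosed.isClosedEmbedding_subtypeVal.isCompact_preimage hK)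
    (h_preimage₂ := fun K (hK : IsCompact K) =>
      hA.compl.isClosed.isClosedEmbedding_subtypeVal.isCompact_preimage hK)
    (h_cover := fun K _ => ?_)).symm
  simp only [Subtype.range_coe, union_compl_self, subset_univ]

end UniformOnFun

namespace MU

variable {X Y : Type*} [TopologicalSpace X] [MetricSpace Y] {A : Set X}

def restrict (hA : IsClopen A) (F : MU X Y) : MU A Y :=
  ⟨UniformOnFun.ofFun _ (A.domRestrict F.val'), F.2.restrict hA⟩

open Classical in
noncomputable def glue (hA : IsClopen A) (F₁ : MU A Y) (F₂ : MU ↥Aᶜ Y) : MU X Y :=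
  ⟨UniformOnFun.ofFun _ fun x => if h : x ∈ A then F₁.val' ⟨x, h⟩ else F₂.val' ⟨x, h⟩, by
    refine (isMinimalUsco_iff_restrict_and_restrict_compl hA).2 ⟨?_, ?_⟩ <;>
      simp only [UniformOnFun.toFun_ofFun, apply_dite (fun K : NonemptyCompacts Y => (K : Set Y)),
        domRestrict_dite, domRestrict_dite_compl]
    exacts [F₁.2, F₂.2]⟩

noncomputable def restrictEquiv (hA : IsClopen A) : MU X Y ≃ MU A Y × MU ↥Aᶜ Y where
  toFun F := (F.restrict hA, F.restrict hA.compl)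
  invFun p := glue hA p.1 p.2
  left_inv F := Subtype.ext <| funext fun x => by
    by_cases hx : x ∈ A
    · exact dif_pos hx
    · exact dif_neg hx
  right_inv p := Prod.ext (Subtype.ext <| funext fun a => dif_pos a.2)
    (Subtype.ext <| funext fun a => dif_neg a.2)

theorem isInducing_restrictEquiv (hA : IsClopen A) :
    IsInducing (restrictEquiv hA : MU X Y → MU A Y × MU ↥Aᶜ Y) :=
  (IsInducing.subtypeVal.prodMap IsInducing.subtypeVal).of_comp_iff.1 <|
    (UniformOnFun.isUniformInducing_restrict_prod_restrict_compl hA).isInducing.comp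
      IsInducing.subtypeVal

end MU

theorem statement6_general {X Y : Type*} [TopologicalSpace X]
    [MetricSpace Y] (A : Set X) (hA : IsClopen A) :
    ∃ e : MU X Y ≃ₜ MU ↥A Y × MU ↥(Aᶜ) Y,
      ∀ F : MU X Y, (∀ x : ↥A, ((e F).1).toFun x = F.toFun ↑x) ∧
        (∀ x : ↥(Aᶜ), ((e F).2).toFun x = F.toFun ↑x) :=
  ⟨(MU.restrictEquiv hA).toHomeomorphOfIsInducing (MU.isInducing_restrictEquiv hA),
    fun _ => ⟨fun _ => rfl, fun _ => rfl⟩⟩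

/-- If `X` is the topological sum of the clopen set `A` and its complement, then `MU(X,Y)` is
homeomorphic to `MU(A,Y) × MU(Aᶜ,Y)` via restriction. -/
theorem statement6 {X Y : Type*} [TopologicalSpace X] [T2Space X] [LocallyCompactSpace X]
    [MetricSpace Y] (A : Set X) (hA : IsClopen A) :
    ∃ e : MU X Y ≃ₜ MU ↥A Y × MU ↥(Aᶜ) Y,
      ∀ F : MU X Y, (∀ x : ↥A, ((e F).1).toFun x = F.toFun ↑x) ∧
        (∀ x : ↥(Aᶜ), ((e F).2).toFun x = F.toFun ↑x) :=
  statement6_general A hA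
end

section
/- Let X be a locally compact Hausdorff space and (Y,d) a metric space with at least two points. If the subspace D₂(X,Y) of MU(X,Y) is σ-compact, then X is discrete. -/
open TopologicalSpace Metric Set

section Aux

open TopologicalSpace Metric Set Filter Uniformity

variable {X Y : Type*} [TopologicalSpace X] [MetricSpace Y]

/-- The two-valued multifunction attached to an open set `U`. -/
def fUm (y₀ y₁ : Y) (U : Set X) (x : X) : Set Y :=
  {y | (y = y₀ ∧ x ∈ closure U) ∨ (y = y₁ ∧ x ∈ closure (interior Uᶜ))}

lemma fUm_subset (y₀ y₁ : Y) (U : Set X) (x : X) : fUm y₀ y₁ U x ⊆ {y₀, y₁} := by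
  rintro y (⟨rfl, -⟩ | ⟨rfl, -⟩) <;> simp

lemma compl_closure_subset_int (U : Set X) : (closure U)ᶜ ⊆ interior Uᶜ :=
  interior_maximal (compl_subset_compl.2 subset_closure) isClosed_closure.isOpen_compl

lemma fUm_nonempty (y₀ y₁ : Y) (U : Set X) (x : X) : (fUm y₀ y₁ U x).Nonempty := by
  by_cases h : x ∈ closure U
  · exact ⟨y₀, Or.inl ⟨rfl, h⟩⟩
  · exact ⟨y₁, Or.inr ⟨rfl, subset_closure (compl_closure_subset_int U h)⟩⟩

lemma fUm_compact (y₀ y₁ : Y) (U : Set X) (x : X) : IsCompact (fUm y₀ y₁ U x) :=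
  Set.Finite.isCompact <| Set.Finite.subset
    ((Set.finite_singleton y₁).insert y₀) (fUm_subset y₀ y₁ U x)

lemma not_mem_closure_int {U : Set X} (hU : IsOpen U) {x : X} (hx : x ∈ U) :
    x ∉ closure (interior Uᶜ) := by
  intro hc
  rcases mem_closure_iff.1 hc U hU hx with ⟨z, hzU, hz⟩
  exact (interior_subset hz) hzU

lemma not_mem_closure_of_mem_int {U : Set X} {x : X} (hx : x ∈ interior Uᶜ) :
    x ∉ closure U := by
  intro hc
  rcases mem_closure_iff.1 hc _ isOpen_interior hx with ⟨z, hzi, hzU⟩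
  exact (interior_subset hzi) hzU

lemma fUm_eq_left {y₀ y₁ : Y} {U : Set X} (hU : IsOpen U) {x : X} (hx : x ∈ U) :
    fUm y₀ y₁ U x = {y₀} := by
  ext y
  simp only [fUm, mem_setOf_eq, mem_singleton_iff]
  constructor
  · rintro (⟨rfl, -⟩ | ⟨rfl, h⟩)
    · rfl
    · exact absurd h (not_mem_closure_int hU hx)
  · rintro rfl
    exact Or.inl ⟨rfl, subset_closure hx⟩

lemma fUm_eq_right {y₀ y₁ : Y} {U : Set X} {x : X} (hx : x ∈ interior Uᶜ) :
    fUm y₀ y₁ U x = {y₁} := by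
  ext y
  simp only [fUm, mem_setOf_eq, mem_singleton_iff]
  constructor
  · rintro (⟨rfl, h⟩ | ⟨rfl, -⟩)
    · exact absurd h (not_mem_closure_of_mem_int hx)
    · rfl
  · rintro rfl
    exact Or.inr ⟨rfl, subset_closure hx⟩

lemma fUm_usco (y₀ y₁ : Y) (U : Set X) : IsUsco (fUm y₀ y₁ U) := by
  refine ⟨fUm_nonempty y₀ y₁ U, fUm_compact y₀ y₁ U, fun x V hV hsub => ?_⟩
  by_cases h0 : x ∈ closure U
  · by_cases h1 : x ∈ closure (interior Uᶜ)
    · have hy0 : y₀ ∈ V := hsub (Or.inl ⟨rfl, h0⟩)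
      have hy1 : y₁ ∈ V := hsub (Or.inr ⟨rfl, h1⟩)
      refine ⟨Set.univ, isOpen_univ, mem_univ x, fun x' _ y hy => ?_⟩
      rcases hy with ⟨rfl, -⟩ | ⟨rfl, -⟩
      · exact hy0
      · exact hy1
    · have hy0 : y₀ ∈ V := hsub (Or.inl ⟨rfl, h0⟩)
      refine ⟨(closure (interior Uᶜ))ᶜ, isClosed_closure.isOpen_compl, h1,
        fun x' hx' y hy => ?_⟩
      rcases hy with ⟨rfl, -⟩ | ⟨rfl, h⟩
      · exact hy0
      · exact absurd h hx'
  · have h1 : x ∈ closure (interior Uᶜ) := subset_closure (compl_closure_subset_int U h0)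
    have hy1 : y₁ ∈ V := hsub (Or.inr ⟨rfl, h1⟩)
    refine ⟨(closure U)ᶜ, isClosed_closure.isOpen_compl, h0, fun x' hx' y hy => ?_⟩
    rcases hy with ⟨rfl, h⟩ | ⟨rfl, -⟩
    · exact absurd h hx'
    · exact hy1

lemma fUm_minimal (y₀ y₁ : Y) (U : Set X) (hU : IsOpen U) :
    IsMinimalUsco (fUm y₀ y₁ U) := by
  refine ⟨fUm_usco y₀ y₁ U, fun G hG hsub => ?_⟩
  funext x
  refine Set.Subset.antisymm (hsub x) ?_
  rintro y (⟨hy0, hx⟩ | ⟨hy1, hx⟩)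
  · rw [hy0]
    by_contra hy
    have hGsub : G x ⊆ ({y₀} : Set Y)ᶜ := by
      intro y' hy'
      simp only [mem_compl_iff, mem_singleton_iff]
      rintro rfl
      exact hy hy'
    obtain ⟨W, hW, hxW, hWsub⟩ := hG.2.2 x ({y₀} : Set Y)ᶜ isOpen_compl_singleton hGsub
    rcases mem_closure_iff.1 hx W hW hxW with ⟨z, hzW, hzU⟩
    obtain ⟨w, hw⟩ := hG.1 z
    have hw0 : w = y₀ := by
      have := hsub z hw
      rw [fUm_eq_left hU hzU] at this
      exact this
    exact (hWsub z hzW hw) hw0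
  · rw [hy1]
    by_contra hy
    have hGsub : G x ⊆ ({y₁} : Set Y)ᶜ := by
      intro y' hy'
      simp only [mem_compl_iff, mem_singleton_iff]
      rintro rfl
      exact hy hy'
    obtain ⟨W, hW, hxW, hWsub⟩ := hG.2.2 x ({y₁} : Set Y)ᶜ isOpen_compl_singleton hGsub
    rcases mem_closure_iff.1 hx W hW hxW with ⟨z, hzW, hzU⟩
    obtain ⟨w, hw⟩ := hG.1 z
    have hw1 : w = y₁ := by
      have := hsub z hw
      rw [fUm_eq_right hzU] at this
      exact this
    exact (hWsub z hzW hw) hw1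

/-- Packaging `fUm` as an element of `MU X Y`. -/
def mkMU (y₀ y₁ : Y) (U : Set X) (hU : IsOpen U) : MU X Y :=
  ⟨UniformOnFun.ofFun {K : Set X | IsCompact K}
      (fun x => ⟨⟨fUm y₀ y₁ U x, fUm_compact y₀ y₁ U x⟩, fUm_nonempty y₀ y₁ U x⟩),
    fUm_minimal y₀ y₁ U hU⟩

lemma mkMU_toFun (y₀ y₁ : Y) (U : Set X) (hU : IsOpen U) :
    (mkMU y₀ y₁ U hU).toFun = fUm y₀ y₁ U := rfl

lemma mkMU_val'_coe (y₀ y₁ : Y) (U : Set X) (hU : IsOpen U) (x : X) :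
    (((mkMU y₀ y₁ U hU).val' x : NonemptyCompacts Y) : Set Y) = fUm y₀ y₁ U x := rfl

lemma mkMU_mem_D2 {y₀ y₁ : Y} (U : Set X) (hU : IsOpen U) :
    mkMU y₀ y₁ U hU ∈ D2 X Y := by
  have hsub : (⋃ x, (mkMU y₀ y₁ U hU).toFun x) ⊆ {y₀, y₁} := by
    rw [mkMU_toFun]
    exact Set.iUnion_subset fun x => fUm_subset y₀ y₁ U x
  refine le_trans (Set.encard_mono hsub) ?_
  refine le_trans (Set.encard_insert_le _ _) ?_
  rw [Set.encard_singleton, one_add_one_eq_two]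

lemma dist_singletons_le {y₀ y₁ : Y} (A B : NonemptyCompacts Y)
    (hA : (A : Set Y) = {y₀}) (hB : (B : Set Y) = {y₁}) :
    dist y₀ y₁ ≤ dist A B := by
  rw [NonemptyCompacts.dist_eq, hA, hB]
  have fin : EMetric.hausdorffEdist ({y₀} : Set Y) {y₁} ≠ ⊤ :=
    Metric.hausdorffEdist_ne_top_of_nonempty_of_bounded ⟨y₀, rfl⟩ ⟨y₁, rfl⟩
      Bornology.isBounded_singleton Bornology.isBounded_singleton
  have h := Metric.infDist_le_hausdorffDist_of_mem (Set.mem_singleton y₀) fin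
  rwa [Metric.infDist_singleton] at h

end Aux

section Aux2

open TopologicalSpace Metric Set Filter Uniformity

lemma exists_disjoint_opens {X : Type*} [TopologicalSpace X] [T2Space X] {x₀ : X}
    (hx : ¬ IsOpen ({x₀} : Set X)) {N : Set X} (hN : IsOpen N) (hxN : x₀ ∈ N) :
    ∃ (V : ℕ → Set X) (z : ℕ → X), (∀ n, IsOpen (V n)) ∧ (∀ n, V n ⊆ N) ∧
      (∀ n, z n ∈ V n) ∧ ∀ m n, m ≠ n → Disjoint (V m) (V n) := by
  have key : ∀ A : Set X, IsOpen A → x₀ ∈ A →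
      ∃ p : Set X × Set X × X, IsOpen p.1 ∧ x₀ ∈ p.1 ∧ p.1 ⊆ A ∧ IsOpen p.2.1 ∧
        p.2.1 ⊆ A ∧ p.2.2 ∈ p.2.1 ∧ Disjoint p.2.1 p.1 := by
    intro A hA hxA
    have hz : ∃ z ∈ A, z ≠ x₀ := by
      by_contra hcon
      push_neg at hcon
      have : A = {x₀} :=
        Set.Subset.antisymm (fun a ha => hcon a ha) (Set.singleton_subset_iff.2 hxA)
      exact hx (this ▸ hA)
    obtain ⟨z, hzA, hzx⟩ := hz
    obtain ⟨V, B, hV, hB, hzV, hxB, hVB⟩ := t2_separation hzx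
    exact ⟨(B ∩ A, V ∩ A, z), hB.inter hA, ⟨hxB, hxA⟩, Set.inter_subset_right,
      hV.inter hA, Set.inter_subset_right, ⟨hzV, hzA⟩,
      hVB.mono Set.inter_subset_left Set.inter_subset_left⟩
  choose p hopen hmem hsubA hVopen hVsubA hzV hdis using key
  let f : ℕ → {A : Set X // IsOpen A ∧ x₀ ∈ A} := fun n =>
    Nat.rec ⟨N, hN, hxN⟩ (fun _ q => ⟨(p q.1 q.2.1 q.2.2).1, hopen _ _ _, hmem _ _ _⟩) n
  have hstep : ∀ n, (f (n + 1)).1 = (p (f n).1 (f n).2.1 (f n).2.2).1 := fun _ => rfl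
  have hanti : ∀ n, (f (n + 1)).1 ⊆ (f n).1 := by
    intro n
    rw [hstep n]
    exact hsubA _ _ _
  have hmono : ∀ m n, m ≤ n → (f n).1 ⊆ (f m).1 := by
    intro m n
    induction n with
    | zero =>
      intro hmn
      obtain rfl := Nat.le_zero.1 hmn
      exact subset_rfl
    | succ k ih =>
      intro hmn
      rcases Nat.lt_or_ge m (k + 1) with hk | hk
      · exact (hanti k).trans (ih (Nat.lt_succ_iff.1 hk))
      · obtain rfl : m = k + 1 := le_antisymm hmn hk
        exact subset_rfl
  refine ⟨fun n => (p (f n).1 (f n).2.1 (f n).2.2).2.1,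
    fun n => (p (f n).1 (f n).2.1 (f n).2.2).2.2,
    fun n => hVopen _ _ _, ?_, fun n => hzV _ _ _, ?_⟩
  · intro n
    refine (hVsubA _ _ _).trans ?_
    have : (f n).1 ⊆ (f 0).1 := hmono 0 n (Nat.zero_le n)
    exact this
  · have hkey : ∀ m n, m < n →
        Disjoint (p (f m).1 (f m).2.1 (f m).2.2).2.1 (p (f n).1 (f n).2.1 (f n).2.2).2.1 := by
      intro m n hmn
      have h1 : (p (f n).1 (f n).2.1 (f n).2.2).2.1 ⊆ (f (m + 1)).1 :=
        (hVsubA _ _ _).trans (hmono (m + 1) n hmn)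
      have h2 : Disjoint (p (f m).1 (f m).2.1 (f m).2.2).2.1 (f (m + 1)).1 := by
        rw [hstep m]
        exact hdis _ _ _
      exact h2.mono_right h1
    intro m n hmn
    rcases lt_or_gt_of_ne hmn with h | h
    · exact hkey m n h
    · exact (hkey n m h).symm

end Aux2

open Uniformity Filter in
/-- If `D₂(X,Y)` is σ-compact, then `X` is discrete. -/
theorem statement8 {X Y : Type*} [TopologicalSpace X] [T2Space X] [LocallyCompactSpace X]
    [MetricSpace Y] [Nontrivial Y] (h : IsSigmaCompact (D2 X Y)) :
    DiscreteTopology X := by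
  rw [discreteTopology_iff_isOpen_singleton]
  by_contra hcon
  push_neg at hcon
  obtain ⟨x₀, hx₀⟩ := hcon
  obtain ⟨K, hKc, hKmem⟩ := exists_compact_mem_nhds x₀
  have hx₀K : x₀ ∈ interior K := mem_interior_iff_mem_nhds.2 hKmem
  obtain ⟨V, z, hVopen, hVsub, hzV, hVdisj⟩ := exists_disjoint_opens hx₀ isOpen_interior hx₀K
  obtain ⟨y₀, y₁, hy⟩ := exists_pair_ne Y
  have hεpos : 0 < dist y₀ y₁ := dist_pos.2 hy
  set Us : Set ℕ → Set X := fun s => ⋃ n ∈ s, V n with hUs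
  have hUsopen : ∀ s, IsOpen (Us s) := fun s => isOpen_biUnion fun n _ => hVopen n
  set Fm : Set ℕ → MU X Y := fun s => mkMU y₀ y₁ (Us s) (hUsopen s) with hFm
  obtain ⟨C, hCc, hCun⟩ := h
  have hmem : ∀ s : Set ℕ, ∃ m, Fm s ∈ C m := by
    intro s
    have h2 : Fm s ∈ D2 X Y := mkMU_mem_D2 _ _
    rw [← hCun] at h2
    exact Set.mem_iUnion.1 h2
  choose g hg using hmem
  have hfib : ∃ m, ¬ (g ⁻¹' {m}).Countable := by
    by_contra hall
    push_neg at hall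
    have huniv : (Set.univ : Set (Set ℕ)).Countable := by
      have he : (Set.univ : Set (Set ℕ)) = ⋃ m, g ⁻¹' {m} := by
        ext s; simp
      rw [he]
      exact Set.countable_iUnion hall
    rw [Set.countable_univ_iff] at huniv
    obtain ⟨f, hf⟩ := (countable_iff_exists_injective (Set ℕ)).1 huniv
    exact Function.cantor_injective f hf
  obtain ⟨n₀, hn₀⟩ := hfib
  have hfibinf : (g ⁻¹' {n₀}).Infinite := fun hfin => hn₀ hfin.countable
  set W : Set (TopologicalSpace.NonemptyCompacts Y × TopologicalSpace.NonemptyCompacts Y) :=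
    {p | dist p.1 p.2 < dist y₀ y₁ / 2} with hWdef
  have hWmem : W ∈ 𝓤 (TopologicalSpace.NonemptyCompacts Y) :=
    Metric.dist_mem_uniformity (by linarith)
  have hKS : K ∈ {K : Set X | IsCompact K} := hKc
  have hgen : UniformOnFun.gen {K : Set X | IsCompact K} K W ∈
      𝓤 (UniformOnFun X (TopologicalSpace.NonemptyCompacts Y) {K : Set X | IsCompact K}) :=
    UniformOnFun.gen_mem_uniformity _ _ hKS hWmem
  set E : Set (MU X Y × MU X Y) :=
    (fun q : MU X Y × MU X Y => (q.1.1, q.2.1)) ⁻¹'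
      (UniformOnFun.gen {K : Set X | IsCompact K} K W) with hEdef
  have hEmem : E ∈ 𝓤 (MU X Y) := by
    rw [show 𝓤 (MU X Y) = Filter.comap (fun q : MU X Y × MU X Y => (q.1.1, q.2.1))
        (𝓤 (UniformOnFun X (TopologicalSpace.NonemptyCompacts Y) {K : Set X | IsCompact K}))
        from rfl]
    exact Filter.preimage_mem_comap hgen
  obtain ⟨t, htfin, htsub⟩ := (hCc n₀).totallyBounded _ hEmem
  have hchoice : ∀ s : Set ℕ, ∃ c : MU X Y, s ∈ g ⁻¹' {n₀} → c ∈ t ∧ (Fm s, c) ∈ E := by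
    intro s
    by_cases hs : s ∈ g ⁻¹' {n₀}
    · have hFmC : Fm s ∈ C n₀ := by
        have hh := hg s
        rw [Set.mem_preimage, Set.mem_singleton_iff] at hs
        rwa [hs] at hh
      have hcov := htsub hFmC
      rw [Set.mem_iUnion₂] at hcov
      obtain ⟨c, hct, hcE⟩ := hcov
      exact ⟨c, fun _ => ⟨hct, hcE⟩⟩
    · exact ⟨Fm ∅, fun hmem' => absurd hmem' hs⟩
  choose c hc using hchoice
  obtain ⟨s₁, hs₁, s₂, hs₂, hne, heq⟩ :=
    hfibinf.exists_ne_map_eq_of_mapsTo (fun s hs => (hc s hs).1) htfin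
  have hdiff : ∃ m, (m ∈ s₁ ∧ m ∉ s₂) ∨ (m ∈ s₂ ∧ m ∉ s₁) := by
    by_contra hno
    push_neg at hno
    apply hne
    ext m
    exact ⟨fun hm => (hno m).1 hm, fun hm => (hno m).2 hm⟩
  obtain ⟨n, hcase⟩ := hdiff
  have hK1 : z n ∈ K := interior_subset (hVsub n (hzV n))
  have key : ∀ sa sb : Set ℕ, n ∈ sa → n ∉ sb →
      dist y₀ y₁ ≤ dist ((Fm sa).val' (z n)) ((Fm sb).val' (z n)) := by
    intro sa sb hna hnb
    apply dist_singletons_le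
    · rw [hFm]
      rw [mkMU_val'_coe]
      apply fUm_eq_left (hUsopen sa)
      exact Set.mem_biUnion hna (hzV n)
    · rw [hFm]
      rw [mkMU_val'_coe]
      apply fUm_eq_right
      have hVn_sub : V n ⊆ (Us sb)ᶜ := by
        intro x hxV
        simp only [hUs, Set.mem_compl_iff, Set.mem_iUnion]
        rintro ⟨m, hm, hxm⟩
        have hmn : m ≠ n := fun hh => hnb (hh ▸ hm)
        exact Set.disjoint_left.1 (hVdisj m n hmn) hxm hxV
      exact interior_maximal hVn_sub (hVopen n) (hzV n)
  have hE1 := (hc s₁ hs₁).2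
  have hE2 := (hc s₂ hs₂).2
  rw [heq] at hE1
  have hd1 : dist ((Fm s₁).val' (z n)) ((c s₂).val' (z n)) < dist y₀ y₁ / 2 := hE1 (z n) hK1
  have hd2 : dist ((Fm s₂).val' (z n)) ((c s₂).val' (z n)) < dist y₀ y₁ / 2 := hE2 (z n) hK1
  rcases hcase with ⟨h1, h2⟩ | ⟨h1, h2⟩
  · have hk := key s₁ s₂ h1 h2
    have htr := dist_triangle_right ((Fm s₁).val' (z n)) ((Fm s₂).val' (z n)) ((c s₂).val' (z n))
    linarith
  · have hk := key s₂ s₁ h1 h2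
    have htr := dist_triangle_right ((Fm s₂).val' (z n)) ((Fm s₁).val' (z n)) ((c s₂).val' (z n))
    linarith
end

section
/- Let X be a locally compact Hausdorff space and (Y,d) a metric space with at least two points. If the subspace D₂(X,Y) of MU(X,Y) is locally σ-compact, then X is a topological sum of a compact space and a discrete space. Moreover, if Y is non-discrete, then X is discrete. -/
open TopologicalSpace Metric Set

section Aux

open Filter Topology

attribute [local instance 10] Classical.propDecidable
set_option linter.unusedSectionVars false

variable {X Y : Type*} [TopologicalSpace X] [MetricSpace Y]

/-- The two-point step multifunction: `{a}` on `U`, `{a,b}` on the boundary of `U`,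
`{b}` outside the closure of `U`. -/
def twoPtFun (a b : Y) (U : Set X) : X → Set Y := fun x =>
  if x ∈ U then {a} else if x ∈ closure U then {a, b} else {b}

lemma twoPtFun_subset (a b : Y) (U : Set X) (x : X) : twoPtFun a b U x ⊆ {a, b} := by
  unfold twoPtFun; split_ifs <;> simp [Set.insert_subset_iff]

lemma twoPtFun_nonempty (a b : Y) (U : Set X) (x : X) : (twoPtFun a b U x).Nonempty := by
  unfold twoPtFun; split_ifs <;> simp

lemma twoPtFun_isCompact (a b : Y) (U : Set X) (x : X) : IsCompact (twoPtFun a b U x) := by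
  unfold twoPtFun; split_ifs
  · exact isCompact_singleton
  · exact (Set.Finite.insert a (Set.finite_singleton b)).isCompact
  · exact isCompact_singleton

lemma twoPtFun_of_mem (a b : Y) {U : Set X} {x : X} (hx : x ∈ U) :
    twoPtFun a b U x = {a} := by unfold twoPtFun; rw [if_pos hx]

lemma twoPtFun_of_not_mem_closure (a b : Y) {U : Set X} {x : X} (hx : x ∉ closure U) :
    twoPtFun a b U x = {b} := by
  unfold twoPtFun
  rw [if_neg (fun h => hx (subset_closure h)), if_neg hx]

lemma isUsco_twoPtFun (a b : Y) (U : Set X) (hU : IsOpen U) : IsUsco (twoPtFun a b U) := by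
  refine ⟨twoPtFun_nonempty a b U, twoPtFun_isCompact a b U, ?_⟩
  intro x V hV hsub
  by_cases hb : b ∈ V
  · by_cases ha : a ∈ V
    · exact ⟨Set.univ, isOpen_univ, Set.mem_univ x,
        fun x' _ => (twoPtFun_subset a b U x').trans (by simp [Set.insert_subset_iff, ha, hb])⟩
    · have hx : x ∉ closure U := by
        intro hx
        apply ha; apply hsub
        unfold twoPtFun; split_ifs <;> simp
      refine ⟨(closure U)ᶜ, isClosed_closure.isOpen_compl, hx, fun x' hx' => ?_⟩
      rw [twoPtFun_of_not_mem_closure a b hx']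
      simpa using hb
  · have hxU : x ∈ U := by
      by_contra hxU
      apply hb; apply hsub
      unfold twoPtFun; rw [if_neg hxU]; split_ifs <;> simp
    have ha : a ∈ V := hsub (by rw [twoPtFun_of_mem a b hxU]; rfl)
    refine ⟨U, hU, hxU, fun x' hx' => ?_⟩
    rw [twoPtFun_of_mem a b hx']
    simpa using ha

lemma isMinimalUsco_twoPtFun (a b : Y) (U : Set X)
    (hreg : interior (closure U) = U) : IsMinimalUsco (twoPtFun a b U) := by
  have hU : IsOpen U := hreg ▸ isOpen_interior
  refine ⟨isUsco_twoPtFun a b U hU, ?_⟩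
  rintro G ⟨hne, _hcpt, husc⟩ hsub
  have hGa : ∀ x ∈ U, G x = {a} := by
    intro x hx
    have := hsub x; rw [twoPtFun_of_mem a b hx] at this
    rcases Set.subset_singleton_iff_eq.1 this with h | h
    · exact absurd h (hne x).ne_empty
    · exact h
  have hGb : ∀ x, x ∉ closure U → G x = {b} := by
    intro x hx
    have := hsub x; rw [twoPtFun_of_not_mem_closure a b hx] at this
    rcases Set.subset_singleton_iff_eq.1 this with h | h
    · exact absurd h (hne x).ne_empty
    · exact h
  funext x
  by_cases hxU : x ∈ U
  · rw [twoPtFun_of_mem a b hxU, hGa x hxU]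
  by_cases hxc : x ∈ closure U
  · have ha : a ∈ G x := by
      by_contra ha
      obtain ⟨O, hO, hxO, hOsub⟩ := husc x {a}ᶜ isOpen_compl_singleton
        (fun y hy (h : y = a) => ha (h ▸ hy))
      obtain ⟨x', hx'O, hx'U⟩ := mem_closure_iff.1 hxc O hO hxO
      exact hOsub x' hx'O (by rw [hGa x' hx'U]; exact rfl) rfl
    have hb : b ∈ G x := by
      by_contra hb
      obtain ⟨O, hO, hxO, hOsub⟩ := husc x {b}ᶜ isOpen_compl_singleton
        (fun y hy (h : y = b) => hb (h ▸ hy))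
      have : ¬ O ⊆ closure U := by
        intro hOc
        exact hxU (hreg ▸ (mem_interior_iff_mem_nhds.2 (mem_of_superset (hO.mem_nhds hxO) hOc)))
      obtain ⟨x', hx'O, hx'c⟩ := Set.not_subset.1 this
      exact hOsub x' hx'O (by rw [hGb x' hx'c]; exact rfl) rfl
    refine subset_antisymm ((hsub x).trans ?_) ?_
    · unfold twoPtFun; rw [if_neg hxU, if_pos hxc]
    · unfold twoPtFun; rw [if_neg hxU, if_pos hxc]
      exact Set.insert_subset ha (Set.singleton_subset_iff.2 hb)
  · rw [twoPtFun_of_not_mem_closure a b hxc, hGb x hxc]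

/-- The two-point multifunction, valued in nonempty compact sets. -/
def twoPtNC (a b : Y) (U : Set X) (x : X) : NonemptyCompacts Y :=
  ⟨⟨twoPtFun a b U x, twoPtFun_isCompact a b U x⟩, twoPtFun_nonempty a b U x⟩

/-- The two-point minimal usco map as an element of `MU X Y`. -/
def twoPtMU (a b : Y) (U : Set X) (hreg : interior (closure U) = U) : MU X Y :=
  ⟨UniformOnFun.ofFun _ (twoPtNC a b U), isMinimalUsco_twoPtFun a b U hreg⟩

lemma twoPtMU_toFun (a b : Y) (U : Set X) (hreg : interior (closure U) = U) :
    (twoPtMU a b U hreg).toFun = twoPtFun a b U := rfl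

lemma twoPtMU_mem_D2 (a b : Y) (U : Set X) (hreg : interior (closure U) = U) :
    twoPtMU a b U hreg ∈ D2 X Y := by
  have h1 : (⋃ x, (twoPtMU a b U hreg).toFun x) ⊆ {a, b} :=
    Set.iUnion_subset fun x => twoPtFun_subset a b U x
  calc (⋃ x, (twoPtMU a b U hreg).toFun x).encard ≤ ({a, b} : Set Y).encard :=
        Set.encard_le_encard h1
    _ ≤ 2 := by
        refine le_trans (Set.encard_insert_le _ _) ?_
        rw [Set.encard_singleton]; exact le_refl 2

/-- The two-point minimal usco map as an element of `D2 X Y`. -/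
def twoPtD2 (a b : Y) (U : Set X) (hreg : interior (closure U) = U) : ↥(D2 X Y) :=
  ⟨twoPtMU a b U hreg, twoPtMU_mem_D2 a b U hreg⟩

lemma twoPtD2_val' (a b : Y) (U : Set X) (hreg : interior (closure U) = U) (x : X) :
    (((twoPtD2 a b U hreg : ↥(D2 X Y)) : MU X Y).val' x : Set Y) = twoPtFun a b U x := rfl

/-- The constant minimal usco map. -/
def constMU (X : Type*) [TopologicalSpace X] (y : Y) : MU X Y :=
  ⟨UniformOnFun.ofFun _ (fun _ => ⟨⟨{y}, isCompact_singleton⟩, Set.singleton_nonempty y⟩), by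
    constructor
    · exact ⟨fun _ => Set.singleton_nonempty y, fun _ => isCompact_singleton,
        fun x V hV hsub => ⟨Set.univ, isOpen_univ, Set.mem_univ x, fun x' _ => hsub⟩⟩
    · rintro G ⟨hne, _, _⟩ hsub
      funext x
      rcases Set.subset_singleton_iff_eq.1 (hsub x) with h | h
      · exact absurd h (hne x).ne_empty
      · exact h⟩

lemma constMU_mem_D2 (y : Y) : constMU X y ∈ D2 X Y := by
  have h1 : (⋃ x, (constMU X y).toFun x) ⊆ {y} := Set.iUnion_subset fun x => le_refl _
  calc (⋃ x, (constMU X y).toFun x).encard ≤ ({y} : Set Y).encard := Set.encard_le_encard h1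
    _ ≤ 2 := by rw [Set.encard_singleton]; norm_num

/-- The constant minimal usco map as an element of `D2 X Y`. -/
def constD2 (X : Type*) [TopologicalSpace X] (y : Y) : ↥(D2 X Y) :=
  ⟨constMU X y, constMU_mem_D2 y⟩

lemma constD2_val' (y : Y) (x : X) :
    (((constD2 X y : ↥(D2 X Y)) : MU X Y).val' x : Set Y) = {y} := rfl

lemma regOpen_interior_closure {Z : Type*} [TopologicalSpace Z] (A : Set Z) :
    interior (closure (interior (closure A))) = interior (closure A) := by
  apply subset_antisymm
  · have h1 : closure (interior (closure A)) ⊆ closure A :=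
      closure_minimal interior_subset isClosed_closure
    exact interior_mono h1
  · conv_lhs => rw [← interior_interior (s := closure A)]
    exact interior_mono subset_closure

lemma disjoint_closure_of_isOpen {Z : Type*} [TopologicalSpace Z] {U A : Set Z}
    (hU : IsOpen U) (h : Disjoint U A) : Disjoint U (closure A) := by
  rw [Set.disjoint_left]
  intro x hxU hxA
  have hsub : A ⊆ Uᶜ := Set.disjoint_left.1 h.symm
  have : closure A ⊆ Uᶜ := closure_minimal hsub hU.isClosed_compl
  exact this hxA hxU

/-- Every infinite open subset of a T2 space contains an infinite pairwise disjoint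
family of nonempty open sets. -/
lemma exists_disjoint_family {Z : Type*} [TopologicalSpace Z] [T2Space Z] {V : Set Z}
    (hV : IsOpen V) (hinf : V.Infinite) :
    ∃ W : ℕ → Set Z, (∀ n, IsOpen (W n)) ∧ (∀ n, (W n).Nonempty) ∧ (∀ n, W n ⊆ V) ∧
      ∀ m n, m ≠ n → Disjoint (W m) (W n) := by
  by_cases hI : {x | x ∈ V ∧ IsOpen ({x} : Set Z)}.Infinite
  · -- infinitely many isolated points: take singletons
    let e := hI.natEmbedding
    refine ⟨fun n => {(e n).1}, fun n => (e n).2.2, fun n => Set.singleton_nonempty _,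
      fun n => Set.singleton_subset_iff.2 (e n).2.1, fun m n hmn => ?_⟩
    rw [Set.disjoint_singleton]
    exact fun h => hmn (e.injective (Subtype.ext h))
  · -- finitely many isolated points: recursively split open sets
    set I := {x | x ∈ V ∧ IsOpen ({x} : Set Z)} with hIdef
    have hIfin : I.Finite := Set.not_infinite.1 hI
    have hV'o : IsOpen (V \ I) := hV.sdiff hIfin.isClosed
    have hV'ne : (V \ I).Nonempty := (hinf.diff hIfin).nonempty
    have step : ∀ O : {O : Set Z // IsOpen O ∧ O.Nonempty ∧ O ⊆ V \ I},
        ∃ p : {O : Set Z // IsOpen O ∧ O.Nonempty ∧ O ⊆ V \ I} ×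
            {O : Set Z // IsOpen O ∧ O.Nonempty ∧ O ⊆ V \ I},
          p.1.1 ⊆ O.1 ∧ p.2.1 ⊆ O.1 ∧ Disjoint p.1.1 p.2.1 := by
      rintro ⟨O, hOo, ⟨x, hxO⟩, hOV'⟩
      have hxni : ¬ IsOpen ({x} : Set Z) := (hOV' hxO).2 ∘ fun h => ⟨(hOV' hxO).1, h⟩
      have : ∃ y ∈ O, y ≠ x := by
        by_contra hcon
        push_neg at hcon
        have hOx : O = {x} := subset_antisymm (fun y hy => hcon y hy)
          (Set.singleton_subset_iff.2 hxO)
        exact hxni (hOx ▸ hOo)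
      obtain ⟨y, hyO, hyx⟩ := this
      obtain ⟨u, v, hu, hv, hxu, hyv, huv⟩ := t2_separation hyx.symm
      exact ⟨⟨⟨u ∩ O, hu.inter hOo, ⟨x, hxu, hxO⟩, (Set.inter_subset_right).trans hOV'⟩,
        ⟨v ∩ O, hv.inter hOo, ⟨y, hyv, hyO⟩, (Set.inter_subset_right).trans hOV'⟩⟩,
        Set.inter_subset_right, Set.inter_subset_right,
        (huv.mono Set.inter_subset_left Set.inter_subset_left)⟩
    choose next hn1 hn2 hn3 using step
    let O : ℕ → {O : Set Z // IsOpen O ∧ O.Nonempty ∧ O ⊆ V \ I} := fun n =>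
      Nat.rec ⟨V \ I, hV'o, hV'ne, subset_rfl⟩ (fun _ p => (next p).2) n
    have hOsucc : ∀ n, O (n + 1) = (next (O n)).2 := fun n => rfl
    let W : ℕ → Set Z := fun n => (next (O n)).1.1
    have hmono : ∀ m n, m ≤ n → (O n).1 ⊆ (O m).1 := by
      intro m n hmn
      induction n with
      | zero => rw [Nat.le_zero.1 hmn]
      | succ k ih =>
        rcases Nat.lt_or_ge m (k+1) with h | h
        · exact ((hOsucc k ▸ hn2 (O k)) : (O (k+1)).1 ⊆ (O k).1).trans
            (ih (Nat.lt_succ_iff.1 h))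
        · rw [Nat.le_antisymm hmn h]
    have hdisj : ∀ m n, m < n → Disjoint (W m) (W n) := by
      intro m n hmn
      have h1 : W n ⊆ (O n).1 := hn1 (O n)
      have h2 : (O n).1 ⊆ (O (m+1)).1 := hmono (m+1) n hmn
      have h3 : Disjoint (W m) ((O (m+1)).1) := hOsucc m ▸ hn3 (O m)
      exact h3.mono_right (h1.trans h2)
    refine ⟨W, fun n => (next (O n)).1.2.1, fun n => (next (O n)).1.2.2.1,
      fun n => ((hn1 (O n)).trans (O n).2.2.2).trans Set.diff_subset, fun m n hmn => ?_⟩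
    rcases Nat.lt_or_ge m n with h | h
    · exact hdisj m n h
    · exact (hdisj n m (Nat.lt_of_le_of_ne h (Ne.symm hmn))).symm


lemma isCompact_directedOn (X : Type*) [TopologicalSpace X] :
    DirectedOn (· ⊆ ·) {K : Set X | IsCompact K} :=
  fun K hK L hL => ⟨K ∪ L, hK.union hL, Set.subset_union_left, Set.subset_union_right⟩

/-- Extraction of a basic "ball" neighborhood in `D2 X Y`. -/
lemma nhds_ball {s : Set ↥(D2 X Y)} (C : ↥(D2 X Y)) (hns : s ∈ 𝓝 C) :
    ∃ (K : Set X) (ε : ℝ), IsCompact K ∧ 0 < ε ∧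
      ∀ G : ↥(D2 X Y), (∀ x ∈ K, dist ((G : MU X Y).val' x) ((C : MU X Y).val' x) < ε) →
        G ∈ s := by
  rw [mem_nhds_subtype] at hns
  obtain ⟨t, ht, hts⟩ := hns
  have key : 𝓝 ((C : ↥(D2 X Y)) : MU X Y) =
      Filter.comap Subtype.val (𝓝 ((C : MU X Y).1)) := nhds_subtype_eq_comap
  have ht' : t ∈ Filter.comap Subtype.val (𝓝 ((C : MU X Y).1)) := key ▸ ht
  obtain ⟨u, hu, hut⟩ := Filter.mem_comap.1 ht'
  have hbasis := UniformOnFun.hasBasis_nhds_of_basis X (NonemptyCompacts Y)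
    {K : Set X | IsCompact K} ((C : MU X Y).1) ⟨∅, isCompact_empty⟩
    (isCompact_directedOn X) Metric.uniformity_basis_dist
  rw [hbasis.mem_iff] at hu
  obtain ⟨⟨K, ε⟩, ⟨hK, hε⟩, hsub⟩ := hu
  refine ⟨K, ε, hK, hε, fun G hG => ?_⟩
  apply hts
  show (G : MU X Y) ∈ t
  apply hut
  show ((G : MU X Y)).1 ∈ u
  exact hsub (fun x hx => hG x hx)

/-- The basic entourages of `D2 X Y`. -/
lemma gen_entourage_mem {K : Set X} (hK : IsCompact K) {ε : ℝ} (hε : 0 < ε) :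
    {p : ↥(D2 X Y) × ↥(D2 X Y) |
      ∀ x ∈ K, dist ((p.1 : MU X Y).val' x) ((p.2 : MU X Y).val' x) < ε} ∈
        uniformity ↥(D2 X Y) := by
  have h0 : UniformOnFun.gen {K : Set X | IsCompact K} K
      {p : NonemptyCompacts Y × NonemptyCompacts Y | dist p.1 p.2 < ε} ∈
        uniformity (UniformOnFun X (NonemptyCompacts Y) {K : Set X | IsCompact K}) :=
    UniformOnFun.gen_mem_uniformity _ _ hK (dist_mem_uniformity hε)
  have h1 : {p : MU X Y × MU X Y | ∀ x ∈ K, dist (p.1.val' x) (p.2.val' x) < ε} ∈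
      uniformity (MU X Y) := by
    have hu : uniformity (MU X Y) = Filter.comap
        (fun q : MU X Y × MU X Y => (q.1.1, q.2.1))
        (uniformity (UniformOnFun X (NonemptyCompacts Y) {K : Set X | IsCompact K})) :=
      uniformity_subtype
    rw [hu]
    exact Filter.mem_comap.2 ⟨_, h0, fun q hq => hq⟩
  have hu2 : uniformity ↥(D2 X Y) = Filter.comap
      (fun q : ↥(D2 X Y) × ↥(D2 X Y) => ((q.1 : MU X Y), (q.2 : MU X Y)))
      (uniformity (MU X Y)) := uniformity_subtype
  rw [hu2]
  exact Filter.mem_comap.2 ⟨_, h1, fun q hq => hq⟩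

lemma dist_le_of_singletons {u v : NonemptyCompacts Y} {a b : Y}
    (hu : (u : Set Y) = {a}) (hv : (v : Set Y) = {b}) : dist a b ≤ dist u v := by
  rw [NonemptyCompacts.dist_eq, hu, hv]
  have fin : EMetric.hausdorffEdist ({a} : Set Y) {b} ≠ ⊤ :=
    hausdorffEdist_ne_top_of_nonempty_of_bounded (Set.singleton_nonempty a)
      (Set.singleton_nonempty b) Bornology.isBounded_singleton Bornology.isBounded_singleton
  have h := infDist_le_hausdorffDist_of_mem (Set.mem_singleton a) fin
  rwa [infDist_singleton] at h

lemma hausdorffDist_twoPt_le (a b : Y) (U : Set X) (x : X) :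
    hausdorffDist (twoPtFun a b U x) {a} ≤ dist a b := by
  have h0 : (0:ℝ) ≤ dist a b := dist_nonneg
  unfold twoPtFun
  split_ifs
  · simp [hausdorffDist_self_zero, h0]
  · apply hausdorffDist_le_of_mem_dist h0
    · intro y hy
      refine ⟨a, rfl, ?_⟩
      rcases Set.mem_insert_iff.1 hy with h | h
      · rw [h, dist_self]; exact h0
      · rw [Set.mem_singleton_iff.1 h]; exact le_of_eq (dist_comm b a)
    · intro y hy
      rw [Set.mem_singleton_iff.1 hy]
      exact ⟨a, Set.mem_insert a _, by rw [dist_self]; exact h0⟩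
  · apply hausdorffDist_le_of_mem_dist h0
    · intro y hy
      rw [Set.mem_singleton_iff.1 hy]
      exact ⟨a, rfl, le_of_eq (dist_comm b a)⟩
    · intro y hy
      rw [Set.mem_singleton_iff.1 hy]
      exact ⟨b, rfl, le_refl _⟩

/-- The key contradiction: if `V` is an infinite open set with compact closure, no σ-compact
subset of `D2 X Y` can contain all the two-point maps supported inside `V`. -/
lemma main_contra [T2Space X] {a b : Y} (hab : a ≠ b) {V : Set X} (hVo : IsOpen V)
    (hVinf : V.Infinite) (hVK : IsCompact (closure V)) {s : Set ↥(D2 X Y)}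
    (hs : IsSigmaCompact s)
    (hmem : ∀ (U : Set X) (hreg : interior (closure U) = U), closure U ⊆ closure V →
      twoPtD2 a b U hreg ∈ s) : False := by
  classical
  obtain ⟨W, hWo, hWne, hWV, hWd⟩ := exists_disjoint_family hVo hVinf
  set t := dist a b with ht
  have htpos : 0 < t := dist_pos.2 hab
  set A : Set ℕ → Set X := fun S => ⋃ n ∈ S, W n with hA
  set U : Set ℕ → Set X := fun S => interior (closure (A S)) with hUdef
  have hreg : ∀ S, interior (closure (U S)) = U S := fun S => regOpen_interior_closure (A S)
  have hclU : ∀ S, closure (U S) ⊆ closure (A S) :=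
    fun S => closure_minimal interior_subset isClosed_closure
  have hUV : ∀ S, closure (U S) ⊆ closure V := by
    intro S
    refine (hclU S).trans (closure_mono ?_)
    exact Set.iUnion₂_subset fun n _ => hWV n
  set F : Set ℕ → ↥(D2 X Y) := fun S => twoPtD2 a b (U S) (hreg S) with hF
  have hFs : ∀ S, F S ∈ s := fun S => hmem _ _ (hUV S)
  have hsep : ∀ S T : Set ℕ, S ≠ T → ∃ x ∈ closure V,
      t ≤ dist (((F S) : MU X Y).val' x) (((F T) : MU X Y).val' x) := by
    have key : ∀ S T : Set ℕ, ∀ n, n ∈ S → n ∉ T → ∃ x ∈ closure V,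
        t ≤ dist (((F S) : MU X Y).val' x) (((F T) : MU X Y).val' x) := by
      intro S T n hnS hnT
      obtain ⟨x, hx⟩ := hWne n
      refine ⟨x, subset_closure (hWV n hx), ?_⟩
      have hxUS : x ∈ U S := by
        have h1 : W n ⊆ A S := Set.subset_biUnion_of_mem hnS
        exact interior_maximal (h1.trans subset_closure) (hWo n) hx
      have hd : Disjoint (W n) (A T) := by
        rw [Set.disjoint_left]
        rintro z hzW hzA
        obtain ⟨m, hm, hzm⟩ := Set.mem_iUnion₂.1 hzA
        exact Set.disjoint_left.1 (hWd n m (fun h => hnT (h ▸ hm))) hzW hzm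
      have hxAT : x ∉ closure (A T) :=
        fun hc => Set.disjoint_left.1 (disjoint_closure_of_isOpen (hWo n) hd) hx hc
      have hxUT : x ∉ closure (U T) := fun hc => hxAT (hclU T hc)
      have hvS : (((F S) : MU X Y).val' x : Set Y) = {a} := by
        rw [hF]
        rw [twoPtD2_val', twoPtFun_of_mem a b hxUS]
      have hvT : (((F T) : MU X Y).val' x : Set Y) = {b} := by
        rw [hF]
        rw [twoPtD2_val', twoPtFun_of_not_mem_closure a b hxUT]
      exact dist_le_of_singletons hvS hvT
    intro S T hST
    obtain ⟨n, hn⟩ : ∃ n, ¬ (n ∈ S ↔ n ∈ T) := by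
      by_contra hc
      push_neg at hc
      exact hST (Set.ext hc)
    by_cases hnS : n ∈ S
    · exact key S T n hnS (fun hnT => hn ⟨fun _ => hnT, fun _ => hnS⟩)
    · have hnT : n ∈ T := by
        by_contra hnT
        exact hn ⟨fun h => absurd h hnS, fun h => absurd h hnT⟩
      obtain ⟨x, hxV, hxd⟩ := key T S n hnT hnS
      exact ⟨x, hxV, by rwa [dist_comm]⟩
  obtain ⟨Cn, hCc, hCU⟩ := hs
  have hex : ∀ S : Set ℕ, ∃ m, F S ∈ Cn m := fun S => by
    have h1 := hFs S
    rw [← hCU] at h1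
    exact Set.mem_iUnion.1 h1
  choose g hg using hex
  have hfib : ∃ m, {S : Set ℕ | g S = m}.Infinite := by
    by_contra hc
    push_neg at hc
    have hcount : (Set.univ : Set (Set ℕ)).Countable := by
      have huniv : (Set.univ : Set (Set ℕ)) = ⋃ m, {S | g S = m} := by
        ext S
        simp only [Set.mem_univ, Set.mem_iUnion, Set.mem_setOf_eq, true_iff]
        exact ⟨g S, rfl⟩
      rw [huniv]
      exact Set.countable_iUnion fun m => (hc m).countable
    have : Countable (Set ℕ) := Set.countable_univ_iff.1 hcount
    obtain ⟨f, hf⟩ := Countable.exists_injective_nat (Set ℕ)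
    exact Function.cantor_injective f hf
  obtain ⟨m, hm⟩ := hfib
  set Eset : Set (↥(D2 X Y) × ↥(D2 X Y)) := {p : ↥(D2 X Y) × ↥(D2 X Y) |
    ∀ x ∈ closure V, dist ((p.1 : MU X Y).val' x) ((p.2 : MU X Y).val' x) < t/2} with hEdef
  have hE : Eset ∈ uniformity ↥(D2 X Y) := gen_entourage_mem hVK (by linarith)
  obtain ⟨tf, htf, htsub⟩ := ((hCc m).totallyBounded) _ hE
  have hmap : ∀ S ∈ {S : Set ℕ | g S = m}, ∃ y, y ∈ tf ∧ (F S, y) ∈ Eset := by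
    intro S hS
    have h1 : F S ∈ Cn m := by rw [← hS]; exact hg S
    have h2 := htsub h1
    obtain ⟨y, hy, hmemy⟩ := Set.mem_iUnion₂.1 h2
    exact ⟨y, hy, hmemy⟩
  set pick : Set ℕ → ↥(D2 X Y) := fun S =>
    if h : ∃ y, y ∈ tf ∧ (F S, y) ∈ Eset then h.choose else F S with hpickdef
  have hpick : ∀ S ∈ {S : Set ℕ | g S = m}, pick S ∈ tf ∧ (F S, pick S) ∈ Eset := by
    intro S hS
    have h := hmap S hS
    simp only [hpickdef, dif_pos h]
    exact h.choose_spec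
  obtain ⟨S1, hS1, S2, hS2, hne12, heq⟩ :=
    hm.exists_ne_map_eq_of_mapsTo (fun S hS => (hpick S hS).1) htf
  obtain ⟨x, hxV, hxd⟩ := hsep S1 S2 hne12
  have h1 := ((hpick S1 hS1).2) x hxV
  have h2 := ((hpick S2 hS2).2) x hxV
  rw [heq] at h1
  have htri : dist (((F S1) : MU X Y).val' x) (((F S2) : MU X Y).val' x) < t := by
    calc dist (((F S1) : MU X Y).val' x) (((F S2) : MU X Y).val' x)
        ≤ dist (((F S1) : MU X Y).val' x) (((pick S2) : MU X Y).val' x) +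
          dist (((pick S2) : MU X Y).val' x) (((F S2) : MU X Y).val' x) := dist_triangle _ _ _
      _ < t/2 + t/2 := by
          apply add_lt_add h1
          rw [dist_comm]
          exact h2
      _ = t := by ring
  linarith

end Aux

/-- If `D₂(X,Y)` is locally σ-compact, then `X` is the topological sum of a compact space and a
discrete space; moreover, if `Y` is non-discrete, then `X` is discrete. -/
theorem statement9 {X Y : Type*} [TopologicalSpace X] [T2Space X] [LocallyCompactSpace X]
    [MetricSpace Y] [Nontrivial Y] (h : LocallySigmaCompact ↥(D2 X Y)) :
    (∃ K : Set X, IsOpen K ∧ IsCompact K ∧ DiscreteTopology ↥(Kᶜ)) ∧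
      (¬DiscreteTopology Y → DiscreteTopology X) := by
  classical
  obtain ⟨a, b, hab⟩ := exists_pair_ne Y
  constructor
  · -- Part 1: X is the sum of a compact space and a discrete space
    obtain ⟨s, hsn, hssc⟩ := h (constD2 X b)
    obtain ⟨K₀, ε, hK₀, hε, hball⟩ := nhds_ball _ hsn
    have hiso : ∀ x, x ∉ K₀ → IsOpen ({x} : Set X) := by
      intro x₀ hx₀
      by_contra hni
      haveI hnb : (nhdsWithin x₀ {x₀}ᶜ).NeBot :=
        ⟨fun hbot => hni ((isOpen_singleton_iff_punctured_nhds x₀).2 hbot)⟩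
      obtain ⟨nb, hnbm, hnbsub, hnbc⟩ :=
        local_compact_nhds (hK₀.isClosed.isOpen_compl.mem_nhds hx₀)
      set V := interior nb with hVdef
      have hVo : IsOpen V := isOpen_interior
      have hVcl : closure V ⊆ nb := closure_minimal interior_subset hnbc.isClosed
      have hVK : IsCompact (closure V) := hnbc.of_isClosed_subset isClosed_closure hVcl
      have hVinf : V.Infinite := infinite_of_mem_nhds x₀ (interior_mem_nhds.2 hnbm)
      refine main_contra hab hVo hVinf hVK hssc ?_
      intro U hreg hUV
      apply hball
      intro x hx
      have hxU : x ∉ closure U := fun hc => (hnbsub (hVcl (hUV hc))) hx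
      have hd : dist ((twoPtD2 a b U hreg : MU X Y).val' x)
          ((constD2 X b : MU X Y).val' x) = 0 := by
        rw [NonemptyCompacts.dist_eq]
        rw [show (((twoPtD2 a b U hreg : ↥(D2 X Y)) : MU X Y).val' x : Set Y) = {b} by
          rw [twoPtD2_val', twoPtFun_of_not_mem_closure a b hxU]]
        rw [show (((constD2 X b : ↥(D2 X Y)) : MU X Y).val' x : Set Y) = {b} from rfl]
        exact hausdorffDist_self_zero
      rw [hd]; exact hε
    obtain ⟨K', hK'c, hK'i⟩ := exists_compact_superset hK₀
    refine ⟨closure (interior K'), ?_, ?_, ?_⟩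
    · rw [isOpen_iff_forall_mem_open]
      intro x hx
      by_cases hxi : x ∈ interior K'
      · exact ⟨interior K', subset_closure, isOpen_interior, hxi⟩
      · have hxK : x ∉ K₀ := fun hmem => hxi (hK'i hmem)
        exact ⟨{x}, Set.singleton_subset_iff.2 hx, hiso x hxK, rfl⟩
    · exact hK'c.of_isClosed_subset isClosed_closure
        (closure_minimal interior_subset hK'c.isClosed)
    · rw [discreteTopology_iff_isOpen_singleton]
      rintro ⟨x, hx⟩
      have hxK : x ∉ K₀ := fun hmem => hx (subset_closure (hK'i hmem))
      have hopen := hiso x hxK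
      have heq : ({⟨x, hx⟩} : Set ↥((closure (interior K'))ᶜ)) = Subtype.val ⁻¹' {x} := by
        ext q
        simp [Subtype.ext_iff]
      rw [heq]
      exact hopen.preimage continuous_subtype_val
  · -- Part 2: if Y is non-discrete then X is discrete
    intro hYnd
    have hy : ∃ y : Y, ¬ IsOpen ({y} : Set Y) := by
      by_contra hc
      push_neg at hc
      exact hYnd (discreteTopology_iff_isOpen_singleton.2 hc)
    obtain ⟨y₀, hy₀⟩ := hy
    rw [discreteTopology_iff_isOpen_singleton]
    intro x₀
    by_contra hni
    obtain ⟨s, hsn, hssc⟩ := h (constD2 X y₀)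
    obtain ⟨K₀, ε, hK₀, hε, hball⟩ := nhds_ball _ hsn
    have hb' : ∃ b' : Y, b' ≠ y₀ ∧ dist y₀ b' < ε := by
      by_contra hc
      push_neg at hc
      apply hy₀
      have hball' : Metric.ball y₀ ε ⊆ {y₀} := by
        intro z hz
        rw [Set.mem_singleton_iff]
        by_contra hzne
        have h1 := hc z hzne
        rw [Metric.mem_ball, dist_comm] at hz
        linarith
      have : ({y₀} : Set Y) = Metric.ball y₀ ε :=
        subset_antisymm (Set.singleton_subset_iff.2 (Metric.mem_ball_self hε)) hball'
      rw [this]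
      exact Metric.isOpen_ball
    obtain ⟨b', hb'ne, hb'd⟩ := hb'
    haveI hnb : (nhdsWithin x₀ {x₀}ᶜ).NeBot :=
      ⟨fun hbot => hni ((isOpen_singleton_iff_punctured_nhds x₀).2 hbot)⟩
    obtain ⟨nb, hnbm, _hnbsub, hnbc⟩ := local_compact_nhds (Filter.univ_mem (f := nhds x₀))
    set V := interior nb with hVdef
    have hVo : IsOpen V := isOpen_interior
    have hVcl : closure V ⊆ nb := closure_minimal interior_subset hnbc.isClosed
    have hVK : IsCompact (closure V) := hnbc.of_isClosed_subset isClosed_closure hVcl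
    have hVinf : V.Infinite := infinite_of_mem_nhds x₀ (interior_mem_nhds.2 hnbm)
    refine main_contra (Ne.symm hb'ne) hVo hVinf hVK hssc ?_
    intro U hreg hUV
    apply hball
    intro x hx
    rw [show ((constD2 X y₀ : ↥(D2 X Y)) : MU X Y).val' x =
      (⟨⟨{y₀}, isCompact_singleton⟩, Set.singleton_nonempty y₀⟩ : NonemptyCompacts Y) from rfl]
    rw [NonemptyCompacts.dist_eq]
    calc hausdorffDist (((twoPtD2 y₀ b' U hreg : ↥(D2 X Y)) : MU X Y).val' x : Set Y) ({y₀} : Set Y)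
        = hausdorffDist (twoPtFun y₀ b' U x) {y₀} := by rw [twoPtD2_val']
      _ ≤ dist y₀ b' := hausdorffDist_twoPt_le y₀ b' U x
      _ < ε := hb'd
end

section
/- Let X be a locally compact Hausdorff space and let Y be a separable, non-discrete metric space with at least two points. Then the following are equivalent: (1) MU(X,Y) is ccc; (2) MU(X,Y) is locally ccc; (3) X is discrete. -/
open TopologicalSpace Metric Set

/-- A space satisfies the countable chain condition (ccc) if every pairwise disjoint family of
nonempty open sets is countable. -/
def CCC (Z : Type*) [TopologicalSpace Z] : Prop :=
  ∀ S : Set (Set Z), (∀ s ∈ S, IsOpen s ∧ s.Nonempty) → S.PairwiseDisjoint id → S.Countable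

/-- A space is locally ccc if every point has a ccc neighborhood. -/
def LocallyCCC (Z : Type*) [TopologicalSpace Z] : Prop :=
  ∀ z : Z, ∃ s ∈ nhds z, CCC ↥s



-- ===== Auxiliary lemmas =====


-- HMP: separability of ℝ → Z
theorem separableSpace_fun_real {Z : Type*} [TopologicalSpace Z] [SeparableSpace Z] [Nonempty Z] :
    SeparableSpace (ℝ → Z) := by
  classical
  obtain ⟨D, hDc, hDd⟩ := exists_countable_dense Z
  have hDne : D.Nonempty := hDd.nonempty
  haveI := hDc.to_subtype
  haveI : Nonempty D := hDne.to_subtype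
  let cnt : ∀ k : ℕ, (Fin k → ℚ) → ℝ → ℕ := fun k q t =>
    (Finset.univ.filter fun i => (q i : ℝ) < t).card
  let gfun : (Σ k : ℕ, (Fin k → ℚ) × (Fin (k+1) → D)) → (ℝ → Z) := fun p t =>
    (p.2.2 ⟨min (cnt p.1 p.2.1 t) p.1, by omega⟩ : Z)
  refine ⟨⟨Set.range gfun, countable_range _, ?_⟩⟩
  rw [(isTopologicalBasis_pi (fun _ : ℝ => isTopologicalBasis_opens)).dense_iff]
  rintro o ⟨U, F, hU, rfl⟩ ⟨f, hf⟩
  rw [Set.mem_pi] at hf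
  have hpick : ∀ t ∈ F, ∃ z, z ∈ D ∧ z ∈ U t := by
    intro t ht
    obtain ⟨z, hz1, hz2⟩ := hDd.exists_mem_open (hU t ht) ⟨f t, hf t ht⟩
    exact ⟨z, hz1, hz2⟩
  choose pt hptD hptU using hpick
  set k := F.card with hk
  let T : Fin k ≃o {x // x ∈ F} := F.orderIsoOfFin rfl
  have hT : ∀ i i' : Fin k, i ≤ i' → ((T i : ℝ) ≤ (T i' : ℝ)) := by
    intro i i' h
    exact_mod_cast Subtype.coe_le_coe.2 (T.monotone h)
  have hq : ∀ i : Fin k, ∃ r : ℚ, (∀ i' : Fin k, i' < i → ((T i' : ℝ) < r)) ∧ ((r : ℝ) < T i) := by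
    intro i
    rcases Nat.eq_zero_or_pos i.val with h0 | hpos
    · obtain ⟨r, hr⟩ := exists_rat_lt (T i : ℝ)
      refine ⟨r, fun i' hi' => absurd (Fin.lt_def.1 hi') (by omega), hr⟩
    · have hlt : (⟨i.val - 1, by omega⟩ : Fin k) < i := by
        simp only [Fin.lt_def]; omega
      obtain ⟨r, hr1, hr2⟩ :=
        exists_rat_btwn (K := ℝ) (by exact_mod_cast Subtype.coe_lt_coe.2 (T.strictMono hlt))
      refine ⟨r, fun i' hi' => lt_of_le_of_lt ?_ hr1, hr2⟩
      exact hT i' _ (by simp only [Fin.le_def]; omega)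
  choose q hq1 hq2 using hq
  -- counting
  have hcnt : ∀ j : Fin k, cnt k q ((T j : ℝ)) = j.val + 1 := by
    intro j
    have : (Finset.univ.filter fun i => (q i : ℝ) < (T j : ℝ)) = Finset.Iic j := by
      ext i
      simp only [Finset.mem_filter, Finset.mem_univ, true_and, Finset.mem_Iic]
      constructor
      · intro h
        by_contra hij
        exact lt_asymm h (hq1 i j (lt_of_not_ge hij))
      · intro h
        exact lt_of_lt_of_le (hq2 i) (hT i j h)
    simp only [cnt, this, Fin.card_Iic]
  -- the d-vector
  let d : Fin (k+1) → D := fun m =>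
    if h : 0 < m.val ∧ m.val - 1 < k then
      ⟨pt (T ⟨m.val - 1, h.2⟩ : {x // x ∈ F}) (T ⟨m.val - 1, h.2⟩).2,
        hptD _ _⟩
    else Classical.arbitrary D
  refine ⟨gfun ⟨k, q, d⟩, ?_, Set.mem_range_self _⟩
  rw [Set.mem_pi]
  intro t ht
  set j : Fin k := T.symm ⟨t, ht⟩ with hj
  have hTj : ((T j : {x // x ∈ F}) : ℝ) = t := by rw [hj]; simp
  have hmin : (⟨min (cnt k q t) k, by omega⟩ : Fin (k+1)) = ⟨j.val + 1, by omega⟩ := by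
    apply Fin.ext
    show min (cnt k q t) k = j.val + 1
    rw [← hTj, hcnt j]
    exact min_eq_left (Nat.succ_le_of_lt j.isLt)
  show (d ⟨min (cnt k q t) k, by omega⟩ : Z) ∈ U t
  rw [hmin]
  have hd : (d ⟨j.val + 1, by omega⟩ : Z) = pt t ht := by
    simp only [d]
    rw [dif_pos ⟨by omega, by simpa using j.2⟩]
    simp only [Nat.add_sub_cancel]
    have h2 : (⟨j.val, by omega⟩ : Fin k) = j := rfl
    congr 1 <;> rw [h2, hTj]
  rw [hd]
  exact hptU t ht


section ZornUsco
variable {X Y : Type*} [TopologicalSpace X] [TopologicalSpace Y] [T2Space Y]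

theorem isUsco_iInter_chain {c : Set (X → Set Y)} (hc : IsChain (· ≤ ·) c) (hne : c.Nonempty)
    (husco : ∀ G ∈ c, IsUsco G) : IsUsco (fun x => ⋂ G ∈ c, G x) := by
  haveI : Nonempty c := hne.to_subtype
  have hdir : ∀ x : X, Directed (fun s t : Set Y => s ⊇ t) (fun G : c => G.1 x) := by
    intro x G H
    rcases hc.total G.2 H.2 with h | h
    · exact ⟨G, subset_rfl, fun y hy => h x hy⟩
    · exact ⟨H, fun y hy => h x hy, subset_rfl⟩
  have hval : ∀ x, (⋂ G ∈ c, G x) = ⋂ G : c, G.1 x := fun x => by rw [Set.biInter_eq_iInter]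
  have hcmp : ∀ (G : c) (x : X), IsCompact (G.1 x) := fun G x => (husco G.1 G.2).2.1 x
  have hcls : ∀ (G : c) (x : X), IsClosed (G.1 x) := fun G x => (hcmp G x).isClosed
  have hnonempty : ∀ x, (⋂ G ∈ c, G x).Nonempty := by
    intro x
    rw [hval]
    exact IsCompact.nonempty_iInter_of_directed_nonempty_isCompact_isClosed _ (hdir x)
      (fun G => (husco G.1 G.2).1 x) (fun G => hcmp G x) (fun G => hcls G x)
  refine ⟨hnonempty, ?_, ?_⟩
  · intro x
    obtain ⟨G₀, hG₀⟩ := hne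
    exact IsCompact.of_isClosed_subset (hcmp ⟨G₀, hG₀⟩ x)
      (by show IsClosed (⋂ G ∈ c, G x); rw [hval]; exact isClosed_iInter fun G => hcls G x)
      (by show (⋂ G ∈ c, G x) ⊆ (⟨G₀, hG₀⟩ : ↥c).1 x; rw [hval]; exact Set.iInter_subset (fun G : ↥c => G.1 x) ⟨G₀, hG₀⟩)
  · intro x V hV hsub
    -- find a member of the chain with G x ⊆ V
    have : ∃ G : c, G.1 x ⊆ V := by
      by_contra hcon
      push_neg at hcon
      have hne2 : ∀ G : c, (G.1 x ∩ Vᶜ).Nonempty := by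
        intro G
        rcases Set.not_subset.1 (hcon G) with ⟨y, hy1, hy2⟩
        exact ⟨y, hy1, hy2⟩
      have hdir2 : Directed (fun s t : Set Y => s ⊇ t) (fun G : c => G.1 x ∩ Vᶜ) := by
        intro G H
        obtain ⟨K, h1, h2⟩ := hdir x G H
        exact ⟨K, Set.inter_subset_inter_left _ h1, Set.inter_subset_inter_left _ h2⟩
      have := IsCompact.nonempty_iInter_of_directed_nonempty_isCompact_isClosed
        (fun G : c => G.1 x ∩ Vᶜ) hdir2 hne2
        (fun G => (hcmp G x).inter_right hV.isClosed_compl)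
        (fun G => (hcls G x).inter hV.isClosed_compl)
      obtain ⟨y, hy⟩ := this
      rw [Set.mem_iInter] at hy
      have hyV : y ∉ V := (hy (Classical.arbitrary _)).2
      have hyI : y ∈ ⋂ G ∈ c, G x := by
        rw [hval, Set.mem_iInter]; exact fun G => (hy G).1
      exact hyV (hsub hyI)
    obtain ⟨G, hGV⟩ := this
    obtain ⟨U, hUo, hxU, hU⟩ := (husco G.1 G.2).2.2 x V hV hGV
    refine ⟨U, hUo, hxU, fun x' hx' => ?_⟩
    show (⋂ G ∈ c, G x') ⊆ V
    rw [hval]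
    exact le_trans (Set.iInter_subset _ G) (hU x' hx')

theorem exists_minimalUsco_le {F : X → Set Y} (hF : IsUsco F) :
    ∃ M : X → Set Y, IsMinimalUsco M ∧ ∀ x, M x ⊆ F x := by
  set S : Set ((X → Set Y)ᵒᵈ) := {G | IsUsco (OrderDual.ofDual G) ∧ OrderDual.ofDual G ≤ F}
  have hzorn := zorn_le_nonempty₀ S ?_ (OrderDual.toDual F) ⟨hF, le_rfl⟩
  · obtain ⟨m, _, hmS, hmax⟩ := hzorn
    refine ⟨OrderDual.ofDual m, ⟨hmS.1, ?_⟩, fun x => hmS.2 x⟩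
    intro G hG hle
    have hGS : OrderDual.toDual G ∈ S := ⟨hG, le_trans (fun x => hle x) hmS.2⟩
    have := hmax hGS (fun x => hle x)
    exact funext fun x => le_antisymm (hle x) (this x)
  · intro c hcS hchain y hy
    -- c is a chain in the dual order; corresponding set of functions
    set c' : Set (X → Set Y) := OrderDual.ofDual '' c
    have hc'chain : IsChain (· ≤ ·) c' := by
      rintro _ ⟨a, ha, rfl⟩ _ ⟨b, hb, rfl⟩ hab
      rcases hchain ha hb (fun h => hab (congrArg _ h)) with h | h
      · exact Or.inr h
      · exact Or.inl h
    have hc'ne : c'.Nonempty := ⟨OrderDual.ofDual y, y, hy, rfl⟩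
    have husco : ∀ G ∈ c', IsUsco G := by
      rintro _ ⟨a, ha, rfl⟩; exact (hcS ha).1
    refine ⟨OrderDual.toDual (fun x => ⋂ G ∈ c', G x),
      ⟨isUsco_iInter_chain hc'chain hc'ne husco, ?_⟩, ?_⟩
    · obtain ⟨G₀, hG₀⟩ := hc'ne
      exact le_trans (fun x => Set.biInter_subset_of_mem hG₀) ((hcS (by
        obtain ⟨a, ha, rfl⟩ := hG₀; exact ha)).2)
    · intro z hz x
      exact Set.biInter_subset_of_mem ⟨z, hz, rfl⟩
  
end ZornUsco


section Seq
variable {X : Type*} [TopologicalSpace X] [T2Space X]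

theorem exists_disjoint_seq {x₀ : X} {V₀ : Set X} (hV₀ : IsOpen V₀) (hx₀V : x₀ ∈ V₀)
    (hx₀ : ∀ V : Set X, IsOpen V → x₀ ∈ V → ∃ x ∈ V, x ≠ x₀) :
    ∃ (U : ℕ → Set X) (x : ℕ → X), (∀ n, IsOpen (U n)) ∧ (∀ n, x n ∈ U n) ∧
      (∀ n, U n ⊆ V₀) ∧ (∀ m n, m ≠ n → Disjoint (U m) (U n)) := by
  classical
  -- the type of "states"
  let St := {V : Set X // IsOpen V ∧ x₀ ∈ V ∧ V ⊆ V₀}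
  have step : ∀ V : St, Nonempty
      {q : (Set X × X) × St // IsOpen q.1.1 ∧ q.1.2 ∈ q.1.1 ∧ q.1.1 ⊆ V.1 ∧ q.2.1 ⊆ V.1 ∧
        Disjoint q.1.1 q.2.1} := by
    rintro ⟨V, hVo, hxV, hVsub⟩
    obtain ⟨x₁, hx₁V, hx₁ne⟩ := hx₀ V hVo hxV
    obtain ⟨u, v, huo, hvo, hx₁u, hx₀v, huv⟩ := t2_separation hx₁ne
    refine ⟨⟨⟨(u ∩ V, x₁), ⟨v ∩ V, hvo.inter hVo, ⟨hx₀v, hxV⟩,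
      fun z hz => hVsub hz.2⟩⟩, ?_, ?_, ?_, ?_, ?_⟩⟩
    · exact huo.inter hVo
    · exact ⟨hx₁u, hx₁V⟩
    · exact Set.inter_subset_right
    · exact Set.inter_subset_right
    · exact huv.mono Set.inter_subset_left Set.inter_subset_left
  let stepF := fun V : St => Classical.choice (step V)
  let W : ℕ → St := fun n => Nat.rec ⟨V₀, hV₀, hx₀V, subset_rfl⟩ (fun _ ih => (stepF ih).1.2) n
  have hWsucc : ∀ n, W (n + 1) = (stepF (W n)).1.2 := fun n => rfl
  let U : ℕ → Set X := fun n => (stepF (W n)).1.1.1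
  let x : ℕ → X := fun n => (stepF (W n)).1.1.2
  have hUo : ∀ n, IsOpen (U n) := fun n => (stepF (W n)).2.1
  have hxU : ∀ n, x n ∈ U n := fun n => (stepF (W n)).2.2.1
  have hUW : ∀ n, U n ⊆ (W n).1 := fun n => (stepF (W n)).2.2.2.1
  have hWW : ∀ n, (W (n + 1)).1 ⊆ (W n).1 := fun n => (stepF (W n)).2.2.2.2.1
  have hUdisj : ∀ n, Disjoint (U n) ((W (n + 1)).1) := fun n => (stepF (W n)).2.2.2.2.2
  have hWmono : ∀ m n, m ≤ n → (W n).1 ⊆ (W m).1 := by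
    intro m n h
    induction n with
    | zero => cases Nat.le_zero.1 h; exact subset_rfl
    | succ k ih =>
      rcases Nat.lt_or_ge m (k+1) with h' | h'
      · exact (hWW k).trans (ih (Nat.lt_succ_iff.1 h'))
      · have : m = k + 1 := le_antisymm h h'
        subst this; exact subset_rfl
  have hsub : ∀ n, U n ⊆ V₀ := fun n => (hUW n).trans (W n).2.2.2
  have key : ∀ m n, m < n → Disjoint (U m) (U n) := by
    intro m n hmn
    have : U n ⊆ (W (m + 1)).1 := (hUW n).trans (hWmono (m+1) n hmn)
    exact ((hUdisj m).mono_right this).symm.symm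
  refine ⟨U, x, hUo, hxU, hsub, fun m n hmn => ?_⟩
  rcases lt_or_gt_of_ne hmn with h | h
  · exact key m n h
  · exact (key n m h).symm
end Seq


noncomputable section AuxMU
open Filter
open scoped Uniformity
variable {X Y : Type*} [TopologicalSpace X] [MetricSpace Y]

/-- The singleton nonempty compact set. -/
def sNC (y : Y) : NonemptyCompacts Y := ⟨⟨{y}, isCompact_singleton⟩, Set.singleton_nonempty y⟩

lemma sNC_coe (y : Y) : (sNC y : Set Y) = {y} := rfl

lemma dist_sNC (a b : Y) : dist (sNC a) (sNC b) = dist a b := by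
  rw [NonemptyCompacts.dist_eq]
  apply le_antisymm
  · apply Metric.hausdorffDist_le_of_mem_dist dist_nonneg
    · intro x hx
      rw [sNC_coe, Set.mem_singleton_iff] at hx
      exact ⟨b, rfl, by rw [hx]⟩
    · intro y hy
      rw [sNC_coe, Set.mem_singleton_iff] at hy
      exact ⟨a, rfl, by simp [hy, dist_comm]⟩
  · have hne : EMetric.hausdorffEdist (sNC a : Set Y) (sNC b : Set Y) ≠ ⊤ :=
      Metric.hausdorffEdist_ne_top_of_nonempty_of_bounded (Set.singleton_nonempty a)
        (Set.singleton_nonempty b) Bornology.isBounded_singleton Bornology.isBounded_singleton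
    have := Metric.infDist_le_hausdorffDist_of_mem (s := (sNC a : Set Y)) (t := (sNC b : Set Y))
      (x := a) rfl hne
    rwa [sNC_coe, Metric.infDist_singleton] at this

lemma dist_le_of_subset_pair {A : Set Y} (hA : A.Nonempty) (hAc : IsCompact A) {a b : Y}
    (hsub : A ⊆ {a, b}) :
    dist (⟨⟨A, hAc⟩, hA⟩ : NonemptyCompacts Y) (sNC a) ≤ dist a b := by
  rw [NonemptyCompacts.dist_eq]
  apply Metric.hausdorffDist_le_of_mem_dist dist_nonneg
  · intro x hx
    rcases hsub hx with h | h
    · exact ⟨a, rfl, by rw [h, dist_self]; exact dist_nonneg⟩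
    · rw [Set.mem_singleton_iff] at h
      exact ⟨a, rfl, by simp [h, dist_comm]⟩
  · intro y hy
    rw [sNC_coe, Set.mem_singleton_iff] at hy
    obtain ⟨x, hx⟩ := hA
    rcases hsub hx with h | h
    · exact ⟨x, hx, by rw [h, hy, dist_self]; exact dist_nonneg⟩
    · rw [Set.mem_singleton_iff] at h
      exact ⟨x, hx, by simp [h, hy, dist_comm]⟩

/-- Bundle a minimal usco map into `MU X Y`. -/
def MU.ofUsco (M : X → Set Y) (h : IsMinimalUsco M) : MU X Y :=
  ⟨UniformOnFun.ofFun {K : Set X | IsCompact K}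
      (fun x => ⟨⟨M x, h.1.2.1 x⟩, h.1.1 x⟩), h⟩

lemma MU.ofUsco_toFun (M : X → Set Y) (h : IsMinimalUsco M) : (MU.ofUsco M h).toFun = M := rfl

lemma MU.ofUsco_val' (M : X → Set Y) (h : IsMinimalUsco M) (x : X) :
    (MU.ofUsco M h).val' x = ⟨⟨M x, h.1.2.1 x⟩, h.1.1 x⟩ := rfl

lemma MU.usco (F : MU X Y) : IsUsco F.toFun := F.2.1

lemma MU.minimal (F : MU X Y) : IsMinimalUsco F.toFun := F.2

lemma MU.val'_coe (F : MU X Y) (x : X) : (F.val' x : Set Y) = F.toFun x := rfl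

/-- constant map is minimal usco -/
lemma isMinimalUsco_const (y : Y) : IsMinimalUsco (fun _ : X => ({y} : Set Y)) := by
  refine ⟨⟨fun _ => Set.singleton_nonempty y, fun _ => isCompact_singleton, ?_⟩, ?_⟩
  · intro x V hV hsub
    exact ⟨Set.univ, isOpen_univ, trivial, fun x' _ => hsub⟩
  · intro G hG hle
    funext x
    exact ((hG.1 x).subset_singleton_iff).1 (hle x)

/-- singleton-valued map on a discrete space is minimal usco -/
lemma isMinimalUsco_discrete [DiscreteTopology X] (f : X → Y) :
    IsMinimalUsco (fun x : X => ({f x} : Set Y)) := by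
  refine ⟨⟨fun x => Set.singleton_nonempty _, fun _ => isCompact_singleton, ?_⟩, ?_⟩
  · intro x V hV hsub
    refine ⟨{x}, isOpen_discrete _, rfl, ?_⟩
    rintro x' rfl
    exact hsub
  · intro G hG hle
    funext x
    exact ((hG.1 x).subset_singleton_iff).1 (hle x)

/-- on a discrete space, every minimal usco map is singleton-valued -/
def MU.sel (F : MU X Y) (x : X) : Y := (F.usco.1 x).some

lemma MU.sel_mem (F : MU X Y) (x : X) : F.sel x ∈ F.toFun x := (F.usco.1 x).some_mem

lemma MU.toFun_eq_sel [DiscreteTopology X] (F : MU X Y) (x : X) :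
    F.toFun x = {F.sel x} := by
  have h := F.minimal.2 (fun x => {F.sel x}) ?_ (fun x => Set.singleton_subset_iff.2 (F.sel_mem x))
  · rw [← h]
  · exact (isMinimalUsco_discrete (fun x => F.sel x)).1

lemma MU.val'_eq_sNC_sel [DiscreteTopology X] (F : MU X Y) (x : X) :
    F.val' x = sNC (F.sel x) := by
  apply NonemptyCompacts.ext
  rw [sNC_coe]
  exact F.toFun_eq_sel x

/-- neighborhood basis in MU -/
lemma MU.nhds_basis (F₀ : MU X Y) :
    (nhds F₀).HasBasis (fun Kε : Set X × ℝ => IsCompact Kε.1 ∧ 0 < Kε.2)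
      (fun Kε => {G : MU X Y | ∀ x ∈ Kε.1, dist (F₀.val' x) (G.val' x) < Kε.2}) := by
  have hne : ({K : Set X | IsCompact K}).Nonempty := ⟨∅, isCompact_empty⟩
  have hdir : DirectedOn (· ⊆ ·) {K : Set X | IsCompact K} := fun K1 h1 K2 h2 =>
    ⟨K1 ∪ K2, h1.union h2, Set.subset_union_left, Set.subset_union_right⟩
  have hbU := UniformOnFun.hasBasis_uniformity_of_basis X (NonemptyCompacts Y)
    {K : Set X | IsCompact K} hne hdir Metric.uniformity_basis_dist
  have huni : 𝓤 (MU X Y) =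
      Filter.comap (fun q : MU X Y × MU X Y => (q.1.val, q.2.val))
        (𝓤 (UniformOnFun X (NonemptyCompacts Y) {K : Set X | IsCompact K})) :=
    uniformity_subtype
  rw [nhds_eq_comap_uniformity, huni, Filter.comap_comap]
  have := (hbU.comap (fun G : MU X Y => (F₀.val, G.val)))
  refine this.to_hasBasis ?_ ?_
  · rintro ⟨K, ε⟩ ⟨hK, hε⟩
    exact ⟨⟨K, ε⟩, ⟨hK, hε⟩, fun G hG => hG⟩
  · rintro ⟨K, ε⟩ ⟨hK, hε⟩
    exact ⟨⟨K, ε⟩, ⟨hK, hε⟩, fun G hG => hG⟩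

end AuxMU


noncomputable section MainB
variable {X Y : Type*} [TopologicalSpace X] [T2Space X] [MetricSpace Y]

open Classical in
/-- The Boolean step multifunction. -/
def stepFun (U : ℕ → Set X) (v : ℕ → Y) (y₀ b : Y) : X → Set Y := fun x =>
  if h : ∃ n, x ∈ U n then ({v h.choose} : Set Y) else {y₀, b}

theorem stepFun_subset_pair (U : ℕ → Set X) (v : ℕ → Y) (y₀ b : Y)
    (hv : ∀ n, v n ∈ ({y₀, b} : Set Y)) (x : X) : stepFun U v y₀ b x ⊆ {y₀, b} := by
  rw [stepFun]
  split_ifs with h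
  · exact Set.singleton_subset_iff.2 (hv _)
  · exact subset_rfl

theorem stepFun_eq_singleton (U : ℕ → Set X) (v : ℕ → Y) (y₀ b : Y)
    (hUd : ∀ m n, m ≠ n → Disjoint (U m) (U n)) {x : X} {n : ℕ} (hx : x ∈ U n) :
    stepFun U v y₀ b x = {v n} := by
  rw [stepFun]
  have h : ∃ m, x ∈ U m := ⟨n, hx⟩
  rw [dif_pos h]
  have : h.choose = n := by
    by_contra hne
    exact (Set.disjoint_left.1 (hUd _ _ hne) h.choose_spec) hx
  rw [this]

theorem isUsco_stepFun {U : ℕ → Set X} (hUo : ∀ n, IsOpen (U n))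
    (hUd : ∀ m n, m ≠ n → Disjoint (U m) (U n)) (v : ℕ → Y) (y₀ b : Y)
    (hv : ∀ n, v n ∈ ({y₀, b} : Set Y)) : IsUsco (stepFun U v y₀ b) := by
  have hpairc : IsCompact ({y₀, b} : Set Y) := (Set.toFinite _).isCompact
  refine ⟨?_, ?_, ?_⟩
  · intro x
    rw [stepFun]
    split_ifs with h
    · exact Set.singleton_nonempty _
    · exact ⟨y₀, Set.mem_insert _ _⟩
  · intro x
    rw [stepFun]
    split_ifs with h
    · exact isCompact_singleton
    · exact hpairc
  · intro x V hV hsub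
    by_cases h : ∃ n, x ∈ U n
    · obtain ⟨n, hn⟩ := h
      rw [stepFun_eq_singleton U v y₀ b hUd hn] at hsub
      refine ⟨U n, hUo _, hn, fun x' hx' => ?_⟩
      rw [stepFun_eq_singleton U v y₀ b hUd hx']
      exact hsub
    · rw [stepFun, dif_neg h] at hsub
      exact ⟨Set.univ, isOpen_univ, trivial,
        fun x' _ => (stepFun_subset_pair U v y₀ b hv x').trans hsub⟩

end MainB


noncomputable section MainB2
open Filter Function
open scoped Uniformity
variable {X Y : Type*} [TopologicalSpace X] [T2Space X] [LocallyCompactSpace X]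
  [MetricSpace Y] [Nontrivial Y]

theorem not_countable_bool_seq : ¬ Countable (ℕ → Bool) := by
  intro h
  have hsurj : Function.Surjective (fun g : ℕ → Bool => {n | g n = true}) := by
    classical
    intro t
    refine ⟨fun n => if n ∈ t then true else false, ?_⟩
    ext n
    by_cases hn : n ∈ t <;> simp [hn]
  haveI : Countable (Set ℕ) := hsurj.countable
  obtain ⟨f, hf⟩ := exists_surjective_nat (Set ℕ)
  exact Function.cantor_surjective f hf

theorem discrete_of_locallyCCC (hY : ¬DiscreteTopology Y)
    (hccc : LocallyCCC (MU X Y)) : DiscreteTopology X := by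
  classical
  by_contra hX
  -- a non-isolated point of X
  obtain ⟨x₀, hx₀⟩ : ∃ x : X, ¬IsOpen ({x} : Set X) := by
    by_contra h
    push_neg at h
    exact hX (discreteTopology_iff_isOpen_singleton.2 h)
  obtain ⟨y₀, hy₀⟩ : ∃ y : Y, ¬IsOpen ({y} : Set Y) := by
    by_contra h
    push_neg at h
    exact hY (discreteTopology_iff_isOpen_singleton.2 h)
  have hx₀' : ∀ V : Set X, IsOpen V → x₀ ∈ V → ∃ x ∈ V, x ≠ x₀ := by
    intro V hVo hxV
    by_contra h
    push_neg at h
    have : V = {x₀} := Set.eq_singleton_iff_nonempty_unique_mem.2 ⟨⟨x₀, hxV⟩, h⟩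
    exact hx₀ (this ▸ hVo)
  have hy₀' : ∀ ε : ℝ, 0 < ε → ∃ b : Y, b ≠ y₀ ∧ dist b y₀ < ε := by
    intro ε hε
    by_contra h
    push_neg at h
    have : Metric.ball y₀ ε = {y₀} := by
      apply Set.eq_singleton_iff_nonempty_unique_mem.2
      refine ⟨⟨y₀, Metric.mem_ball_self hε⟩, fun z hz => ?_⟩
      by_contra hzne
      exact absurd (Metric.mem_ball.1 hz) (not_lt.2 (h z hzne))
    exact hy₀ (this ▸ Metric.isOpen_ball)
  -- the constant map c ≡ {y₀}
  set c : MU X Y := MU.ofUsco (fun _ : X => ({y₀} : Set Y)) (isMinimalUsco_const y₀) with hc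
  have hcval : ∀ x : X, c.val' x = sNC y₀ := fun x => rfl
  obtain ⟨s, hs, hsccc⟩ := hccc c
  obtain ⟨⟨K, ε⟩, ⟨hK, hε⟩, hball⟩ := (MU.nhds_basis c).mem_iff.1 hs
  obtain ⟨b, hbne, hbd⟩ := hy₀' (ε/2) (by positivity)
  set δ := dist y₀ b with hδ
  have hδpos : 0 < δ := by rw [hδ, dist_comm]; exact dist_pos.2 hbne
  have hδε : δ < ε/2 := by rw [hδ, dist_comm]; exact hbd
  -- a sequence of disjoint open sets inside a compact neighbourhood of x₀
  obtain ⟨C, hCc, hCmem⟩ := exists_compact_mem_nhds x₀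
  obtain ⟨U, xs, hUo, hxU, hUsub, hUdisj⟩ := exists_disjoint_seq isOpen_interior
    (mem_interior_iff_mem_nhds.2 hCmem) hx₀'
  set L : Set X := closure (Set.range xs) with hL
  have hLc : IsCompact L := IsCompact.of_isClosed_subset hCc isClosed_closure
    (closure_minimal (by
      rintro _ ⟨n, rfl⟩
      exact interior_subset (hUsub n (hxU n))) hCc.isClosed)
  -- the family of minimal usco maps
  let v : (ℕ → Bool) → ℕ → Y := fun σ n => if σ n then b else y₀
  have hv : ∀ σ n, v σ n ∈ ({y₀, b} : Set Y) := by
    intro σ n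
    by_cases h : σ n <;> simp [v, h]
  have husco : ∀ σ, IsUsco (stepFun U (v σ) y₀ b) := fun σ =>
    isUsco_stepFun hUo hUdisj (v σ) y₀ b (hv σ)
  have hmin : ∀ σ : ℕ → Bool, ∃ M : X → Set Y, IsMinimalUsco M ∧ ∀ x, M x ⊆ stepFun U (v σ) y₀ b x :=
    fun σ => exists_minimalUsco_le (husco σ)
  choose M hM1 hM2 using hmin
  let Fm : (ℕ → Bool) → MU X Y := fun σ => MU.ofUsco (M σ) (hM1 σ)
  have hMpair : ∀ σ x, M σ x ⊆ {y₀, b} := fun σ x =>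
    (hM2 σ x).trans (stepFun_subset_pair U (v σ) y₀ b (hv σ) x)
  have hMxs : ∀ σ n, M σ (xs n) = {v σ n} := by
    intro σ n
    have h1 : stepFun U (v σ) y₀ b (xs n) = {v σ n} :=
      stepFun_eq_singleton U (v σ) y₀ b hUdisj (hxU n)
    have h2 := hM2 σ (xs n)
    rw [h1] at h2
    exact ((hM1 σ).1.1 (xs n)).subset_singleton_iff.1 h2
  have hFmxs : ∀ σ n, (Fm σ).val' (xs n) = sNC (v σ n) := by
    intro σ n
    apply NonemptyCompacts.ext
    rw [MU.ofUsco_val']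
    exact hMxs σ n
  -- distance to the constant map
  have hFmc : ∀ σ x, dist (c.val' x) ((Fm σ).val' x) ≤ δ := by
    intro σ x
    rw [hcval, dist_comm, MU.ofUsco_val']
    exact dist_le_of_subset_pair ((hM1 σ).1.1 x) ((hM1 σ).1.2.1 x) (hMpair σ x)
  -- the balls
  set B : (ℕ → Bool) → Set (MU X Y) := fun σ =>
    {G : MU X Y | ∀ z ∈ K ∪ L, dist ((Fm σ).val' z) (G.val' z) < δ/3} with hB
  have hBnh : ∀ σ, B σ ∈ nhds (Fm σ) := fun σ =>
    (MU.nhds_basis (Fm σ)).mem_of_mem (i := (K ∪ L, δ/3)) ⟨hK.union hLc, by positivity⟩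
  set O : (ℕ → Bool) → Set (MU X Y) := fun σ => interior (B σ) with hO
  have hFO : ∀ σ, Fm σ ∈ O σ := fun σ => mem_interior_iff_mem_nhds.2 (hBnh σ)
  have hOball : ∀ σ, O σ ⊆ {G : MU X Y | ∀ z ∈ K, dist (c.val' z) (G.val' z) < ε} := by
    intro σ G hG z hz
    have hGB : G ∈ B σ := interior_subset hG
    have h1 := hGB z (Set.mem_union_left _ hz)
    have h2 := hFmc σ z
    calc dist (c.val' z) (G.val' z) ≤ dist (c.val' z) ((Fm σ).val' z)
        + dist ((Fm σ).val' z) (G.val' z) := dist_triangle _ _ _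
      _ < δ + δ/3 := by linarith
      _ < ε := by linarith
  have hOs : ∀ σ, O σ ⊆ s := fun σ => (hOball σ).trans hball
  -- disjointness
  have hdisjO : ∀ σ τ, σ ≠ τ → Disjoint (O σ) (O τ) := by
    intro σ τ hστ
    rw [Set.disjoint_left]
    intro G hGσ hGτ
    obtain ⟨n, hn⟩ := Function.ne_iff.1 hστ
    have hz : xs n ∈ K ∪ L := Set.mem_union_right _ (subset_closure (Set.mem_range_self n))
    have h1 := (interior_subset hGσ) (xs n) hz
    have h2 := (interior_subset hGτ) (xs n) hz
    rw [hFmxs σ n] at h1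
    rw [hFmxs τ n] at h2
    have hvv : dist (v σ n) (v τ n) = δ := by
      rcases Bool.eq_false_or_eq_true (σ n) with h | h <;>
        rcases Bool.eq_false_or_eq_true (τ n) with h' | h'
      · exact absurd (h.trans h'.symm) hn
      · simp [v, h, h', hδ, dist_comm]
      · simp [v, h, h', hδ]
      · exact absurd (h.trans h'.symm) hn
    have htri : dist (v σ n) (v τ n) ≤ dist (sNC (v σ n)) (G.val' (xs n))
        + dist (G.val' (xs n)) (sNC (v τ n)) := by
      rw [← dist_sNC]
      exact dist_triangle _ _ _
    rw [hvv, dist_comm (G.val' (xs n)) (sNC (v τ n))] at htri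
    linarith
  -- transfer to the subspace s and contradict CCC
  let 𝒪 : (ℕ → Bool) → Set ↥s := fun σ => Subtype.val ⁻¹' O σ
  have h𝒪inj : Function.Injective 𝒪 := by
    intro σ τ h
    by_contra hne
    have hFs : Fm σ ∈ s := hOs σ (hFO σ)
    have h1 : (⟨Fm σ, hFs⟩ : ↥s) ∈ 𝒪 σ := hFO σ
    have h2 : (⟨Fm σ, hFs⟩ : ↥s) ∈ 𝒪 τ := h ▸ h1
    exact Set.disjoint_left.1 (hdisjO σ τ hne) (h1 : Fm σ ∈ O σ) (h2 : Fm σ ∈ O τ)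
  have hS := hsccc (Set.range 𝒪) ?_ ?_
  · haveI := hS.to_subtype
    have hinj2 : Function.Injective
        (fun σ : ℕ → Bool => (⟨𝒪 σ, Set.mem_range_self σ⟩ : ↥(Set.range 𝒪))) :=
      fun a b hab => h𝒪inj (congrArg Subtype.val hab)
    have : Countable (ℕ → Bool) := hinj2.countable
    exact not_countable_bool_seq this
  · rintro t ⟨σ, rfl⟩
    constructor
    · exact isOpen_interior.preimage continuous_subtype_val
    · exact ⟨⟨Fm σ, hOs σ (hFO σ)⟩, hFO σ⟩
  · rintro t ⟨σ, rfl⟩ t' ⟨τ, rfl⟩ hne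
    have hστ : σ ≠ τ := fun h => hne (by rw [h])
    exact (hdisjO σ τ hστ).preimage _

end MainB2


universe u v

noncomputable section MainA
open Filter Cardinal
open scoped Uniformity

theorem ccc_of_discrete {X : Type u} {Y : Type v} [TopologicalSpace X] [MetricSpace Y]
    [DiscreteTopology X] [SeparableSpace Y] [Nonempty Y]
    (hsep : SeparableSpace (ℝ → Y)) : CCC (MU X Y) := by
  classical
  intro S hS hdisj
  by_contra hcount
  set W : Type u := (Cardinal.aleph 1 : Cardinal.{u}).out with hWdef
  have hW : #W = Cardinal.aleph 1 := mk_out _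
  have hSA : (Cardinal.aleph 1 : Cardinal.{max u v}) ≤ #(↥S) := by
    have h0 : ¬ (#(↥S) ≤ ℵ₀) := by
      rw [Cardinal.mk_le_aleph0_iff, Set.countable_coe_iff]
      exact hcount
    rw [← Cardinal.succ_aleph0]
    exact Order.succ_le_of_lt (not_le.1 h0)
  have h1 : Cardinal.lift.{max u v} (Cardinal.aleph 1 : Cardinal.{u})
      = (Cardinal.aleph 1 : Cardinal.{max u v}) := by
    rw [← Cardinal.succ_aleph0, Cardinal.lift_succ, Cardinal.lift_aleph0, Cardinal.succ_aleph0]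
  have hWS : Nonempty (W ↪ ↥S) := by
    apply Cardinal.lift_mk_le'.1
    rw [hW, h1, Cardinal.lift_id' (#(↥S))]
    exact hSA
  obtain ⟨e⟩ := hWS
  have hdata : ∀ w : W, ∃ (F : MU X Y) (K : Set X) (ε : ℝ), IsCompact K ∧ 0 < ε ∧
      F ∈ (e w).1 ∧ {G : MU X Y | ∀ z ∈ K, dist (F.val' z) (G.val' z) < ε} ⊆ (e w).1 := by
    intro w
    obtain ⟨ho, hne⟩ := hS (e w).1 (e w).2
    obtain ⟨F, hF⟩ := hne
    obtain ⟨⟨K, ε⟩, ⟨hK, hε⟩, hsub⟩ := (MU.nhds_basis F).mem_iff.1 (ho.mem_nhds hF)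
    exact ⟨F, K, ε, hK, hε, hF, hsub⟩
  choose Fw Kw εw hKw hεw hFmem hsubw using hdata
  have hKfin : ∀ w, (Kw w).Finite := fun w => (hKw w).finite_of_discrete
  set A : Set X := ⋃ w, Kw w with hA
  have hAcard : #(↥A) ≤ Cardinal.continuum := by
    calc #(↥A) ≤ #W * ⨆ w, #(↥(Kw w)) := Cardinal.mk_iUnion_le _
      _ ≤ #W * ℵ₀ := by
          haveI : Nonempty W := Cardinal.mk_ne_zero_iff.1
            (by rw [hW]; exact (Cardinal.aleph_pos 1).ne')
          have hsup : (⨆ w, #(↥(Kw w))) ≤ ℵ₀ := ciSup_le' fun w => (hKfin w).lt_aleph0.le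
          exact mul_le_mul_right hsup _
      _ = Cardinal.aleph 1 := by
          rw [hW, Cardinal.mul_eq_max (Cardinal.aleph0_le_aleph 1) le_rfl]
          exact max_eq_left (Cardinal.aleph0_le_aleph 1)
      _ ≤ Cardinal.continuum := Cardinal.aleph_one_le_continuum
  have hj : Nonempty (↥A ↪ ℝ) := by
    apply Cardinal.lift_mk_le'.1
    rw [Cardinal.mk_real, Cardinal.lift_continuum, Cardinal.lift_uzero]
    exact hAcard
  obtain ⟨j⟩ := hj
  set jx : X → ℝ := fun z => if h : z ∈ A then j ⟨z, h⟩ else 0 with hjx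
  have hjxA : ∀ (z : X) (h : z ∈ A), jx z = j ⟨z, h⟩ := by
    intro z h
    simp only [hjx, dif_pos h]
  -- the open sets in ℝ → Y
  set O : W → Set (ℝ → Y) := fun w =>
    ⋂ z ∈ Kw w, (fun g : ℝ → Y => g (jx z)) ⁻¹' Metric.ball ((Fw w).sel z) (εw w) with hO
  have hmemO : ∀ (w : W) (g : ℝ → Y),
      g ∈ O w ↔ ∀ z ∈ Kw w, dist (g (jx z)) ((Fw w).sel z) < εw w := by
    intro w g
    simp only [hO, Set.mem_iInter, Set.mem_preimage, Metric.mem_ball]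
  have hopen : ∀ w, IsOpen (O w) := fun w =>
    (hKfin w).isOpen_biInter fun z _ => (continuous_apply (jx z)).isOpen_preimage _ isOpen_ball
  have hmemA : ∀ (w : W) (z : X), z ∈ Kw w → z ∈ A := fun w z hz => Set.mem_iUnion.2 ⟨w, hz⟩
  have hnonempty : ∀ w, (O w).Nonempty := by
    intro w
    refine ⟨Function.extend (fun a : ↥A => j a) (fun a => (Fw w).sel a.1)
      (fun _ => Classical.arbitrary Y), ?_⟩
    rw [hmemO]
    intro z hz
    have hzA : z ∈ A := hmemA w z hz
    rw [hjxA z hzA, j.injective.extend_apply _ _ (⟨z, hzA⟩ : ↥A)]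
    simpa using hεw w
  have hdisjO : ∀ w w', w ≠ w' → Disjoint (O w) (O w') := by
    intro w w' hne
    rw [Set.disjoint_left]
    intro g hgw hgw'
    -- build the interpolating minimal usco map
    set H : X → Y := fun z => if h : z ∈ A then g (j ⟨z, h⟩) else Classical.arbitrary Y with hH
    set GH : MU X Y := MU.ofUsco (fun z => {H z}) (isMinimalUsco_discrete H) with hGH
    have hGHval : ∀ z : X, GH.val' z = sNC (H z) := fun z => NonemptyCompacts.ext rfl
    have hGHmem : ∀ w₀ : W, g ∈ O w₀ → GH ∈ (e w₀).1 := by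
      intro w₀ hg
      apply hsubw w₀
      intro z hz
      have hzA : z ∈ A := hmemA w₀ z hz
      rw [hGHval, MU.val'_eq_sNC_sel, dist_sNC]
      have hval : H z = g (jx z) := by rw [hH]; simp only [dif_pos hzA, hjxA z hzA]
      rw [hval, dist_comm]
      exact (hmemO w₀ g).1 hg z hz
    have hssne : (e w).1 ≠ (e w').1 := by
      intro hcontra
      exact hne (e.injective (Subtype.ext hcontra))
    have hdd := hdisj (e w).2 (e w').2 hssne
    exact Set.disjoint_left.1 hdd (hGHmem w hgw) (hGHmem w' hgw')
  haveI := hsep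
  have hcntW : Countable W :=
    Pairwise.countable_of_isOpen_disjoint (fun w w' hne => hdisjO w w' hne) hopen hnonempty
  have : #W ≤ ℵ₀ := Cardinal.mk_le_aleph0
  rw [hW] at this
  exact absurd this (not_le.2 (by
    have := Cardinal.aleph0_lt_aleph_one.{u}
    simpa using this))

end MainA


section Glue

theorem ccc_of_open_injective {Z W : Type*} [TopologicalSpace Z] [TopologicalSpace W]
    {g : W → Z} (hg : IsOpenMap g) (hinj : Function.Injective g) (h : CCC Z) : CCC W := by
  intro S hS hd
  have himg : ((Set.image g) '' S).Countable := by
    apply h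
    · rintro t ⟨u, hu, rfl⟩
      exact ⟨hg u (hS u hu).1, (hS u hu).2.image g⟩
    · rintro t ⟨u, hu, rfl⟩ t' ⟨u', hu', rfl⟩ hne
      have huu : u ≠ u' := fun hh => hne (by rw [hh])
      exact Set.disjoint_image_of_injective hinj (hd hu hu' huu)
  have hpre := himg.preimage (Set.image_injective.2 hinj)
  exact hpre.mono (Set.subset_preimage_image _ _)

theorem CCC.locallyCCC {Z : Type*} [TopologicalSpace Z] (h : CCC Z) : LocallyCCC Z := by
  intro z
  refine ⟨Set.univ, Filter.univ_mem, ?_⟩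
  exact ccc_of_open_injective (isOpen_univ.isOpenMap_subtype_val) Subtype.coe_injective h

end Glue

/-- For separable non-discrete `Y`: `MU(X,Y)` is ccc iff it is locally ccc iff `X` is
discrete. -/
theorem statement15 {X Y : Type*} [TopologicalSpace X] [T2Space X] [LocallyCompactSpace X]
    [MetricSpace Y] [Nontrivial Y] [SeparableSpace Y] (hY : ¬DiscreteTopology Y) :
    (CCC (MU X Y) ↔ DiscreteTopology X) ∧ (LocallyCCC (MU X Y) ↔ DiscreteTopology X) := by
  have hsep : SeparableSpace (ℝ → Y) := separableSpace_fun_real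
  have hAimp : DiscreteTopology X → CCC (MU X Y) := fun h => by
    haveI := h
    exact ccc_of_discrete hsep
  have hBimp : LocallyCCC (MU X Y) → DiscreteTopology X := discrete_of_locallyCCC hY
  have hCimp : CCC (MU X Y) → LocallyCCC (MU X Y) := CCC.locallyCCC
  exact ⟨⟨fun h => hBimp (hCimp h), hAimp⟩, ⟨hBimp, fun h => hCimp (hAimp h)⟩⟩
end

section
/- Let X be a locally compact Hausdorff space and (Y,d) a metric space with at least two points. Then the tightness of MU(X,Y), the character of MU(X,Y), the weight of the uniformity of uniform convergence on compact sets on MU(X,Y), and the cofinality cf(K(X),⊆) of the poset of compact subsets of X ordered by inclusion, are all equal. -/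
open TopologicalSpace Metric Set

/-- The tightness of a space: `ω +` the least `κ` such that whenever `z ∈ closure A`, some
subset of `A` of cardinality `≤ κ` has `z` in its closure. -/
noncomputable def tightnessCard (Z : Type*) [TopologicalSpace Z] : Cardinal :=
  max Cardinal.aleph0 (sInf {κ : Cardinal | ∀ (A : Set Z) (z : Z), z ∈ closure A →
    ∃ B : Set Z, B ⊆ A ∧ Cardinal.mk ↥B ≤ κ ∧ z ∈ closure B})

/-- The character of a space: `ω +` the least `κ` such that every point has a neighborhood base
of cardinality `≤ κ`. -/
noncomputable def characterCard (Z : Type*) [TopologicalSpace Z] : Cardinal :=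
  max Cardinal.aleph0 (sInf {κ : Cardinal | ∀ z : Z, ∃ B : Set (Set Z),
    Cardinal.mk ↥B ≤ κ ∧ (∀ s ∈ B, s ∈ nhds z) ∧ ∀ s ∈ nhds z, ∃ b ∈ B, b ⊆ s})

/-- The weight of a uniformity: `ω +` the least cardinality of a base of entourages. -/
noncomputable def uniformWeightCard (Z : Type*) [UniformSpace Z] : Cardinal :=
  max Cardinal.aleph0 (sInf {κ : Cardinal | ∃ B : Set (Set (Z × Z)),
    Cardinal.mk ↥B ≤ κ ∧ (∀ s ∈ B, s ∈ uniformity Z) ∧ ∀ s ∈ uniformity Z, ∃ b ∈ B, b ⊆ s})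

/-- `cf(K(X),⊆)`: `ω +` the least cardinality of a family of compact sets cofinal in the poset
of compact subsets of `X` ordered by inclusion. -/
noncomputable def compactCofinality (X : Type*) [TopologicalSpace X] : Cardinal :=
  max Cardinal.aleph0 (sInf {κ : Cardinal | ∃ Q : Set (Set X), Cardinal.mk ↥Q ≤ κ ∧
    (∀ q ∈ Q, IsCompact q) ∧ ∀ K : Set X, IsCompact K → ∃ q ∈ Q, K ⊆ q})

universe u v
open TopologicalSpace Metric Set Filter

namespace MUAux

variable {X : Type*} {Y : Type*} [TopologicalSpace X] [MetricSpace Y]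

/-- The basic entourage of `MU X Y`. -/
def EMU (X Y : Type*) [TopologicalSpace X] [MetricSpace Y] (K : Set X) (ε : ℝ) :
    Set (MU X Y × MU X Y) :=
  {p | ∀ x ∈ K, dist (p.1.val' x) (p.2.val' x) < ε}

theorem hasBasis_MU :
    (uniformity (MU X Y)).HasBasis (fun Kε : Set X × ℝ => IsCompact Kε.1 ∧ 0 < Kε.2)
      (fun Kε => EMU X Y Kε.1 Kε.2) := by
  have h1 : ({K : Set X | IsCompact K}).Nonempty := ⟨∅, isCompact_empty⟩
  have h2 : DirectedOn (· ⊆ ·) {K : Set X | IsCompact K} := fun s hs t ht =>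
    ⟨s ∪ t, hs.union ht, subset_union_left, subset_union_right⟩
  have hb := (UniformOnFun.hasBasis_uniformity_of_basis X (NonemptyCompacts Y)
    {K : Set X | IsCompact K} h1 h2 (Metric.uniformity_basis_dist)).comap
    (Prod.map (Subtype.val) (Subtype.val) :
      MU X Y × MU X Y → _)
  rw [show (uniformity (MU X Y)) = _ from rfl]
  convert hb using 2
  all_goals rfl

end MUAux
theorem tightness_le_character (Z : Type*) [TopologicalSpace Z] :
    tightnessCard Z ≤ characterCard Z := by
  classical
  have hT : {κ : Cardinal | ∀ z : Z, ∃ B : Set (Set Z),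
      Cardinal.mk ↥B ≤ κ ∧ (∀ s ∈ B, s ∈ nhds z) ∧ ∀ s ∈ nhds z, ∃ b ∈ B, b ⊆ s}.Nonempty := by
    refine ⟨Cardinal.mk (Set Z), fun z => ⟨{s | s ∈ nhds z}, Cardinal.mk_set_le _,
      fun s hs => hs, fun s hs => ⟨s, hs, subset_rfl⟩⟩⟩
  have hmem := csInf_mem hT
  refine max_le_max le_rfl (csInf_le' ?_)
  intro A z hz
  obtain ⟨B, hBcard, hBnhds, hBbase⟩ := hmem z
  have hpick : ∀ b : ↥B, ∃ a, a ∈ (b : Set Z) ∩ A := fun b =>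
    mem_closure_iff_nhds.mp hz b (hBnhds b b.2)
  choose f hf using hpick
  refine ⟨Set.range f, ?_, ?_, ?_⟩
  · rintro a ⟨b, rfl⟩
    exact (hf b).2
  · exact (Cardinal.mk_range_le).trans hBcard
  · rw [mem_closure_iff_nhds]
    intro s hs
    obtain ⟨b, hbB, hbs⟩ := hBbase s hs
    exact ⟨f ⟨b, hbB⟩, hbs (hf ⟨b, hbB⟩).1, ⟨b, hbB⟩, rfl⟩

theorem character_le_uniformWeight (Z : Type*) [UniformSpace Z] :
    characterCard Z ≤ uniformWeightCard Z := by
  classical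
  have hT : {κ : Cardinal | ∃ B : Set (Set (Z × Z)),
      Cardinal.mk ↥B ≤ κ ∧ (∀ s ∈ B, s ∈ uniformity Z) ∧
        ∀ s ∈ uniformity Z, ∃ b ∈ B, b ⊆ s}.Nonempty :=
    ⟨Cardinal.mk (Set (Z × Z)), {s | s ∈ uniformity Z}, Cardinal.mk_set_le _,
      fun s hs => hs, fun s hs => ⟨s, hs, subset_rfl⟩⟩
  have hmem := csInf_mem hT
  obtain ⟨B, hBcard, hBmem, hBbase⟩ := hmem
  refine max_le_max le_rfl (csInf_le' ?_)
  intro z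
  refine ⟨(fun V => UniformSpace.ball z V) '' B, (Cardinal.mk_image_le).trans hBcard, ?_, ?_⟩
  · rintro s ⟨V, hV, rfl⟩
    exact UniformSpace.ball_mem_nhds z (hBmem V hV)
  · intro s hs
    obtain ⟨V, hV, hVs⟩ := UniformSpace.mem_nhds_iff.mp hs
    obtain ⟨b, hbB, hbV⟩ := hBbase V hV
    exact ⟨UniformSpace.ball z b, ⟨b, hbB, rfl⟩, fun w hw => hVs (hbV hw)⟩
namespace MUAux

theorem cfSet_nonempty (X : Type u) [TopologicalSpace X] :
    {κ : Cardinal | ∃ Q : Set (Set X), Cardinal.mk ↥Q ≤ κ ∧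
      (∀ q ∈ Q, IsCompact q) ∧ ∀ K : Set X, IsCompact K → ∃ q ∈ Q, K ⊆ q}.Nonempty :=
  ⟨Cardinal.mk (Set X), {q | IsCompact q}, Cardinal.mk_set_le _,
    fun _ hq => hq, fun K hK => ⟨K, hK, subset_rfl⟩⟩

theorem uniformWeight_le (X : Type u) (Y : Type v) [TopologicalSpace X] [MetricSpace Y] :
    uniformWeightCard (MU X Y) ≤ Cardinal.lift.{v} (compactCofinality X) := by
  classical
  obtain ⟨Q, hQcard, hQcpt, hQcof⟩ := csInf_mem (cfSet_nonempty X)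
  rw [compactCofinality, Cardinal.lift_max, Cardinal.lift_aleph0, uniformWeightCard]
  refine max_le (le_max_left _ _) (csInf_le' ?_)
  refine ⟨Set.range (fun qn : ↥Q × ℕ => EMU X Y (qn.1 : Set X) (1 / ((qn.2 : ℝ) + 1))), ?_, ?_, ?_⟩
  · calc Cardinal.mk _ = Cardinal.lift.{u} (Cardinal.mk _) := (Cardinal.lift_id' _).symm
      _ ≤ Cardinal.lift.{max u v} (Cardinal.mk (↥Q × ℕ)) := Cardinal.mk_range_le_lift
      _ ≤ Cardinal.lift.{max u v} (max Cardinal.aleph0 (Cardinal.mk ↥Q)) := by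
          refine Cardinal.lift_le.mpr ?_
          rw [Cardinal.mk_prod, Cardinal.mk_nat, Cardinal.lift_uzero, Cardinal.lift_aleph0]
          exact (Cardinal.mul_le_max _ _).trans (max_le (max_le (le_max_right _ _)
            (le_max_left _ _)) (le_max_left _ _))
      _ ≤ max Cardinal.aleph0 (Cardinal.lift.{v}
            (sInf {κ : Cardinal | ∃ Q : Set (Set X), Cardinal.mk ↥Q ≤ κ ∧
              (∀ q ∈ Q, IsCompact q) ∧ ∀ K : Set X, IsCompact K → ∃ q ∈ Q, K ⊆ q})) := by
          rw [Cardinal.lift_max, Cardinal.lift_aleph0]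
          exact max_le_max le_rfl ((Cardinal.lift_le.mpr hQcard).trans_eq
            (by rw [Cardinal.lift_umax.{u, v}]))
  · rintro s ⟨⟨q, n⟩, rfl⟩
    exact hasBasis_MU.mem_of_mem (i := ((q : Set X), 1 / ((n : ℝ) + 1)))
      ⟨hQcpt q q.2, by positivity⟩
  · intro s hs
    obtain ⟨⟨K, ε⟩, ⟨hK, hε⟩, hsub⟩ := hasBasis_MU.mem_iff.mp hs
    obtain ⟨q, hqQ, hKq⟩ := hQcof K hK
    obtain ⟨n, hn⟩ := exists_nat_one_div_lt hε
    refine ⟨_, ⟨(⟨q, hqQ⟩, n), rfl⟩, fun p hp => hsub (fun x hx => ?_)⟩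
    exact lt_trans (hp x (hKq hx)) hn

end MUAux
namespace MUAux

open scoped Classical

variable {X : Type*} {Y : Type*} [TopologicalSpace X] [MetricSpace Y]

/-- Singleton as a nonempty compact set. -/
def singNC (y : Y) : NonemptyCompacts Y := ⟨⟨{y}, isCompact_singleton⟩, ⟨y, rfl⟩⟩

/-- Two-point set as a nonempty compact set. -/
def pairNC (y₀ y₁ : Y) : NonemptyCompacts Y :=
  ⟨⟨{y₀, y₁}, (Set.finite_singleton y₁).insert y₀ |>.isCompact⟩, ⟨y₀, Or.inl rfl⟩⟩

theorem coe_singNC (y : Y) : ((singNC y : NonemptyCompacts Y) : Set Y) = {y} := rfl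

theorem coe_pairNC (y₀ y₁ : Y) : ((pairNC y₀ y₁ : NonemptyCompacts Y) : Set Y) = {y₀, y₁} := rfl

/-- The two-valued map associated to a set `C`. -/
noncomputable def fC (y₀ y₁ : Y) (C : Set X) : X → NonemptyCompacts Y := fun x =>
  if x ∈ interior C then singNC y₀ else if x ∈ C then pairNC y₀ y₁ else singNC y₁

variable {y₀ y₁ : Y} {C : Set X} {x : X}

theorem fC_of_mem_int (h : x ∈ interior C) : fC y₀ y₁ C x = singNC y₀ := if_pos h

theorem fC_of_mem (h1 : x ∉ interior C) (h2 : x ∈ C) : fC y₀ y₁ C x = pairNC y₀ y₁ := by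
  rw [fC, if_neg h1, if_pos h2]

theorem fC_of_not_mem (h : x ∉ C) : fC y₀ y₁ C x = singNC y₁ := by
  rw [fC, if_neg (fun h' => h (interior_subset h')), if_neg h]

theorem fC_subset_pair (x : X) : ((fC y₀ y₁ C x : NonemptyCompacts Y) : Set Y) ⊆ {y₀, y₁} := by
  by_cases h1 : x ∈ interior C
  · rw [fC_of_mem_int h1, coe_singNC]; exact Set.singleton_subset_iff.mpr (Or.inl rfl)
  by_cases h2 : x ∈ C
  · rw [fC_of_mem h1 h2, coe_pairNC]
  · rw [fC_of_not_mem h2, coe_singNC]; exact Set.singleton_subset_iff.mpr (Or.inr rfl)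

theorem fC_usco (hcl : IsClosed C) :
    IsUsco (fun x => ((fC y₀ y₁ C x : NonemptyCompacts Y) : Set Y)) := by
  refine ⟨fun x => (fC y₀ y₁ C x).nonempty, fun x => (fC y₀ y₁ C x).isCompact, ?_⟩
  intro x V hV hsub
  simp only at hsub
  by_cases h1 : x ∈ interior C
  · refine ⟨interior C, isOpen_interior, h1, fun x' hx' => ?_⟩
    show ((fC y₀ y₁ C x' : NonemptyCompacts Y) : Set Y) ⊆ V
    rw [fC_of_mem_int hx']
    rwa [fC_of_mem_int h1] at hsub
  by_cases h2 : x ∈ C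
  · refine ⟨Set.univ, isOpen_univ, trivial, fun x' _ => ?_⟩
    rw [fC_of_mem h1 h2] at hsub
    exact (fC_subset_pair x').trans hsub
  · refine ⟨Cᶜ, hcl.isOpen_compl, h2, fun x' hx' => ?_⟩
    show ((fC y₀ y₁ C x' : NonemptyCompacts Y) : Set Y) ⊆ V
    rw [fC_of_not_mem hx']
    rwa [fC_of_not_mem h2] at hsub

theorem fC_minimal (hcl : IsClosed C) (hreg : C ⊆ closure (interior C)) :
    IsMinimalUsco (fun x => ((fC y₀ y₁ C x : NonemptyCompacts Y) : Set Y)) := by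
  refine ⟨fC_usco hcl, ?_⟩
  intro G hG hsub
  funext x
  refine subset_antisymm (hsub x) ?_
  have key : ∀ (y : Y) (T : Set X), x ∈ closure T →
      (∀ t ∈ T, ((fC y₀ y₁ C t : NonemptyCompacts Y) : Set Y) = {y}) → y ∈ G x := by
    intro y T hxT hval
    by_contra hnot
    have hGx : G x ⊆ ({y} : Set Y)ᶜ := fun z hz hzy => hnot (hzy ▸ hz)
    obtain ⟨U, hU, hxU, hUsub⟩ := hG.2.2 x ({y} : Set Y)ᶜ isClosed_singleton.isOpen_compl hGx
    obtain ⟨t, htU, htT⟩ := _root_.mem_closure_iff.mp hxT U hU hxU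
    obtain ⟨z, hz⟩ := hG.1 t
    have hzy : z = y := by
      have := (hsub t).trans (hval t htT).subset
      exact this hz
    exact hUsub t htU hz (by rw [hzy]; rfl)
  by_cases h1 : x ∈ interior C
  · rw [fC_of_mem_int h1, coe_singNC, Set.singleton_subset_iff]
    exact key y₀ (interior C) (subset_closure h1)
      (fun t ht => by rw [fC_of_mem_int ht, coe_singNC])
  by_cases h2 : x ∈ C
  · rw [fC_of_mem h1 h2, coe_pairNC, Set.insert_subset_iff, Set.singleton_subset_iff]
    constructor
    · exact key y₀ (interior C) (hreg h2) (fun t ht => by rw [fC_of_mem_int ht, coe_singNC])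
    · refine key y₁ Cᶜ ?_ (fun t ht => by rw [fC_of_not_mem ht, coe_singNC])
      rw [closure_compl]
      exact h1
  · rw [fC_of_not_mem h2, coe_singNC, Set.singleton_subset_iff]
    exact key y₁ Cᶜ (subset_closure h2) (fun t ht => by rw [fC_of_not_mem ht, coe_singNC])

theorem mem_fC_iff (hy : y₀ ≠ y₁) :
    y₀ ∈ ((fC y₀ y₁ C x : NonemptyCompacts Y) : Set Y) ↔ x ∈ C := by
  constructor
  · intro h
    by_contra hxC
    rw [fC_of_not_mem hxC, coe_singNC] at h
    exact hy h
  · intro hxC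
    by_cases h1 : x ∈ interior C
    · rw [fC_of_mem_int h1, coe_singNC]; rfl
    · rw [fC_of_mem h1 hxC, coe_pairNC]; exact Or.inl rfl

end MUAux
namespace MUAux

variable {X : Type*} {Y : Type*} [TopologicalSpace X] [MetricSpace Y] {y₀ y₁ : Y} {C : Set X}
  {x : X}

theorem const_minimal (y₀ : Y) :
    IsMinimalUsco (fun _ : X => ((singNC y₀ : NonemptyCompacts Y) : Set Y)) := by
  refine ⟨⟨fun _ => ⟨y₀, rfl⟩, fun _ => isCompact_singleton,
    fun x V hV hsub => ⟨Set.univ, isOpen_univ, trivial, fun _ _ => hsub⟩⟩, ?_⟩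
  intro G hG hsub
  funext x
  refine subset_antisymm (hsub x) ?_
  obtain ⟨z, hz⟩ := hG.1 x
  have hzy : z = y₀ := hsub x hz
  rw [coe_singNC, Set.singleton_subset_iff]
  rwa [← hzy]

/-- The two-valued minimal usco map as an element of `MU X Y`. -/
noncomputable def FC (y₀ y₁ : Y) (C : Set X) (hcl : IsClosed C)
    (hreg : C ⊆ closure (interior C)) : MU X Y :=
  ⟨UniformOnFun.ofFun _ (fC y₀ y₁ C), fC_minimal hcl hreg⟩

/-- The constant minimal usco map as an element of `MU X Y`. -/
noncomputable def F0 (X : Type*) [TopologicalSpace X] {Y : Type*} [MetricSpace Y] (y₀ : Y) :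
    MU X Y :=
  ⟨UniformOnFun.ofFun _ (fun _ => singNC y₀), const_minimal y₀⟩

theorem FC_val' (hcl : IsClosed C) (hreg : C ⊆ closure (interior C)) (x : X) :
    (FC y₀ y₁ C hcl hreg).val' x = fC y₀ y₁ C x := rfl

theorem F0_val' (x : X) : (F0 X y₀).val' x = singNC y₀ := rfl

theorem FC_inj (hy : y₀ ≠ y₁) {C C' : Set X} {h1 h2 h1' h2'}
    (h : FC y₀ y₁ C h1 h2 = FC y₀ y₁ C' h1' h2') : C = C' := by
  ext x
  have hv : (FC y₀ y₁ C h1 h2).val' x = (FC y₀ y₁ C' h1' h2').val' x := by rw [h]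
  rw [FC_val', FC_val'] at hv
  rw [← mem_fC_iff (y₁ := y₁) (C := C) (x := x) hy, hv, mem_fC_iff hy]

theorem exists_rc [T2Space X] [LocallyCompactSpace X] (K : Set X) (hK : IsCompact K) :
    ∃ C : Set X, (IsCompact C ∧ IsClosed C ∧ C ⊆ closure (interior C)) ∧ K ⊆ interior C := by
  obtain ⟨K', hK', hsub⟩ := exists_compact_superset hK
  have hint : interior K' ⊆ interior (closure (interior K')) :=
    interior_maximal subset_closure isOpen_interior
  refine ⟨closure (interior K'),
    ⟨hK'.of_isClosed_subset isClosed_closure (closure_minimal interior_subset hK'.isClosed),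
      isClosed_closure, ?_⟩, hsub.trans hint⟩
  exact closure_mono hint

theorem dist_lower (hx : x ∉ C) :
    dist y₀ y₁ ≤ dist (singNC y₀) (fC y₀ y₁ C x) := by
  rw [fC_of_not_mem hx, NonemptyCompacts.dist_eq]
  have hfin : EMetric.hausdorffEdist ({y₀} : Set Y) ({y₁} : Set Y) ≠ ⊤ :=
    Metric.hausdorffEdist_ne_top_of_nonempty_of_bounded ⟨y₀, rfl⟩ ⟨y₁, rfl⟩
      (Set.finite_singleton _).isBounded (Set.finite_singleton _).isBounded
  have := Metric.infDist_le_hausdorffDist_of_mem (x := y₀) (s := ({y₀} : Set Y))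
    (t := ({y₁} : Set Y)) rfl hfin
  rwa [Metric.infDist_singleton] at this

end MUAux
namespace MUAux

theorem cf_le_tightness (X : Type u) (Y : Type v) [TopologicalSpace X] [T2Space X]
    [LocallyCompactSpace X] [MetricSpace Y] [Nontrivial Y] :
    Cardinal.lift.{v} (compactCofinality X) ≤ tightnessCard (MU X Y) := by
  classical
  obtain ⟨y₀, y₁, hy⟩ := exists_pair_ne Y
  set g : {C : Set X // IsCompact C ∧ IsClosed C ∧ C ⊆ closure (interior C)} → MU X Y :=
    fun c => FC y₀ y₁ c.1 c.2.2.1 c.2.2.2 with hg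
  -- F0 is in the closure of the range of g
  have hclos : F0 X y₀ ∈ closure (Set.range g) := by
    rw [mem_closure_iff_nhds]
    intro N hN
    obtain ⟨V, hV, hball⟩ := UniformSpace.mem_nhds_iff.mp hN
    obtain ⟨⟨K, ε⟩, ⟨hK, hε⟩, hsub⟩ := hasBasis_MU.mem_iff.mp hV
    obtain ⟨C, hC, hKint⟩ := exists_rc K hK
    refine ⟨g ⟨C, hC⟩, hball (hsub ?_), ⟨C, hC⟩, rfl⟩
    intro x hx
    show dist ((F0 X y₀).val' x) ((FC y₀ y₁ C hC.2.1 hC.2.2).val' x) < ε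
    rw [F0_val', FC_val', fC_of_mem_int (hKint hx), dist_self]
    exact hε
  -- tightness set is nonempty
  have hT : {κ : Cardinal | ∀ (A : Set (MU X Y)) (z : MU X Y), z ∈ closure A →
      ∃ B : Set (MU X Y), B ⊆ A ∧ Cardinal.mk ↥B ≤ κ ∧ z ∈ closure B}.Nonempty :=
    ⟨Cardinal.mk (MU X Y), fun A z hz => ⟨A, subset_rfl, Cardinal.mk_set_le _, hz⟩⟩
  obtain ⟨B, hBA, hBcard, hBcl⟩ := csInf_mem hT (Set.range g) (F0 X y₀) hclos
  set Q : Set (Set X) :=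
    {C | ∃ h : IsCompact C ∧ IsClosed C ∧ C ⊆ closure (interior C), g ⟨C, h⟩ ∈ B} with hQ
  -- injection from Q into B
  have hinjQ : Cardinal.lift.{v} (Cardinal.mk ↥Q) ≤ Cardinal.mk ↥B := by
    have hemb : Nonempty (↥Q ↪ ↥B) := by
      refine ⟨⟨fun c => ⟨g ⟨c.1, c.2.choose⟩, c.2.choose_spec⟩, ?_⟩⟩
      intro c c' hcc
      have h2 : g ⟨c.1, c.2.choose⟩ = g ⟨c'.1, c'.2.choose⟩ := congrArg Subtype.val hcc
      exact Subtype.ext (FC_inj hy h2)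
    obtain ⟨e⟩ := hemb
    have h := Cardinal.lift_mk_le_lift_mk_of_injective e.injective
    rw [Cardinal.lift_umax.{u, v}] at h
    rwa [Cardinal.lift_id'.{u, v} (Cardinal.mk ↥B)] at h
  -- Q is cofinal
  have hQcof : ∀ K : Set X, IsCompact K → ∃ q ∈ Q, K ⊆ q := by
    intro K hK
    have hball : UniformSpace.ball (F0 X y₀) (EMU X Y K (dist y₀ y₁)) ∈ nhds (F0 X y₀) :=
      UniformSpace.ball_mem_nhds _
        (hasBasis_MU.mem_of_mem (i := (K, dist y₀ y₁)) ⟨hK, dist_pos.mpr hy⟩)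
    obtain ⟨G, hGball, hGB⟩ := mem_closure_iff_nhds.mp hBcl _ hball
    obtain ⟨c, rfl⟩ := hBA hGB
    refine ⟨c.1, ⟨c.2, by rwa [Subtype.coe_eta]⟩, ?_⟩
    intro x hx
    by_contra hxC
    have h1 : dist ((F0 X y₀).val' x) ((g c).val' x) < dist y₀ y₁ := hGball x hx
    rw [F0_val'] at h1
    exact absurd h1 (not_lt.mpr (dist_lower hxC))
  -- conclude
  rw [compactCofinality, Cardinal.lift_max, Cardinal.lift_aleph0, tightnessCard]
  refine max_le (le_max_left _ _) ?_
  have h3 : sInf {κ : Cardinal | ∃ Q : Set (Set X), Cardinal.mk ↥Q ≤ κ ∧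
      (∀ q ∈ Q, IsCompact q) ∧ ∀ K : Set X, IsCompact K → ∃ q ∈ Q, K ⊆ q}
      ≤ Cardinal.mk ↥Q :=
    csInf_le' ⟨Q, le_rfl, fun q hq => hq.choose.1, hQcof⟩
  exact le_max_of_le_right ((Cardinal.lift_le.mpr h3).trans (hinjQ.trans hBcard))

end MUAux
/-- Tightness, character and uniform weight of `MU(X,Y)` all equal `cf(K(X),⊆)`. -/
theorem statement16 {X : Type u} {Y : Type v} [TopologicalSpace X] [T2Space X] [LocallyCompactSpace X]
    [MetricSpace Y] [Nontrivial Y] :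
    tightnessCard (MU X Y) = Cardinal.lift.{v} (compactCofinality X) ∧
    characterCard (MU X Y) = Cardinal.lift.{v} (compactCofinality X) ∧
    uniformWeightCard (MU X Y) = Cardinal.lift.{v} (compactCofinality X) := by
  have h1 := tightness_le_character (MU X Y)
  have h2 := character_le_uniformWeight (MU X Y)
  have h3 := MUAux.uniformWeight_le X Y
  have h4 := MUAux.cf_le_tightness X Y
  exact ⟨le_antisymm (h1.trans (h2.trans h3)) h4,
    le_antisymm (h2.trans h3) (h4.trans h1),
    le_antisymm h3 (h4.trans (h1.trans h2))⟩
end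

section
/- Let X be a locally compact Hausdorff space and (Y,d) a metric space with at least two points. Then the following are equivalent: (1) MU(X,Y) is metrizable; (2) MU(X,Y) is first countable; (3) MU(X,Y) is Fréchet-Urysohn; (4) MU(X,Y) is sequential; (5) MU(X,Y) has countable tightness; (6) X is hemicompact. -/
open TopologicalSpace Metric Set

/-- `X` is hemicompact: there is a countable family of compact sets cofinal in the compact
subsets of `X` ordered by inclusion. -/
def Hemicompact (X : Type*) [TopologicalSpace X] : Prop :=
  ∃ Q : ℕ → Set X, (∀ n, IsCompact (Q n)) ∧ ∀ K : Set X, IsCompact K → ∃ n, K ⊆ Q n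

/-!
If `X` is hemicompact, the uniformity of uniform convergence on compacta is countably generated,
so the (Hausdorff) space `MU(X,Y)` is metrizable, hence first countable, Fréchet-Urysohn,
sequential and countably tight.

Conversely, fix `a ≠ b` in `Y`. For a regular open `V` with compact closure, the map which is
`{a}` on `V`, `{a, b}` on the boundary of `V` and `{b}` off `closure V` is minimal usco. Since `X`
is locally compact, every compact `K` lies in such a `V`, so the constant map `{a}` is in the
closure of the family of these maps. Countable tightness gives countably many `V n` that still
approximate `{a}` within `dist a b` on every compact `K`, which forces `K ⊆ V n`; thus the
`closure (V n)` form a countable cofinal family of compact sets.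
-/

open Filter

def CountablyTight (Z : Type*) [TopologicalSpace Z] : Prop :=
  ∀ (A : Set Z) (z : Z), z ∈ closure A → ∃ B ⊆ A, B.Countable ∧ z ∈ closure B

theorem tightnessCard_eq_aleph0_iff {Z : Type*} [TopologicalSpace Z] :
    tightnessCard Z = Cardinal.aleph0 ↔ CountablyTight Z := by
  set S := {κ : Cardinal | ∀ (A : Set Z) (z : Z), z ∈ closure A →
    ∃ B : Set Z, B ⊆ A ∧ Cardinal.mk ↥B ≤ κ ∧ z ∈ closure B}
  have hS : S.Nonempty := ⟨Cardinal.mk Z, fun A z hz => ⟨A, subset_rfl, Cardinal.mk_set_le A, hz⟩⟩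
  rw [tightnessCard, max_eq_left_iff]
  constructor
  · intro h A z hz
    obtain ⟨B, hBA, hB, hzB⟩ := csInf_mem hS A z hz
    exact ⟨B, hBA, Cardinal.mk_le_aleph0_iff.1 (hB.trans h) |> countable_coe_iff.1, hzB⟩
  · intro h
    refine csInf_le' fun A z hz => ?_
    obtain ⟨B, hBA, hB, hzB⟩ := h A z hz
    exact ⟨B, hBA, Cardinal.mk_le_aleph0_iff.2 hB.to_subtype, hzB⟩

theorem SequentialSpace.countablyTight {Z : Type*} [TopologicalSpace Z] [SequentialSpace Z] :
    CountablyTight Z := by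
  intro A z hz
  let D : Set Z := {w | ∃ B ⊆ A, B.Countable ∧ w ∈ closure B}
  have hAD : A ⊆ D := fun w hw =>
    ⟨{w}, singleton_subset_iff.2 hw, countable_singleton w, subset_closure rfl⟩
  have hD : IsSeqClosed D := by
    intro u w hu huw
    choose B hBA hB hBu using hu
    refine ⟨⋃ n, B n, iUnion_subset hBA, countable_iUnion hB, ?_⟩
    exact isClosed_closure.mem_of_tendsto huw <| Eventually.of_forall fun n =>
      closure_mono (subset_iUnion B n) (hBu n)
  exact closure_minimal hAD hD.isClosed hz

theorem hemicompact_of_countable {X : Type*} [TopologicalSpace X] {C : Set (Set X)}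
    (hC : C.Countable) (hcompact : ∀ K ∈ C, IsCompact K)
    (hcofinal : ∀ K, IsCompact K → ∃ L ∈ C, K ⊆ L) : Hemicompact X := by
  obtain ⟨L, hL, -⟩ := hcofinal ∅ isCompact_empty
  obtain ⟨Q, rfl⟩ := hC.exists_eq_range ⟨L, hL⟩
  exact ⟨Q, fun n => hcompact _ (mem_range_self n), fun K hK => by simpa using hcofinal K hK⟩

theorem Hemicompact.exists_monotone {X : Type*} [TopologicalSpace X] (hX : Hemicompact X) :
    ∃ Q : ℕ → Set X, (∀ n, IsCompact (Q n)) ∧ Monotone Q ∧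
      ∀ K : Set X, IsCompact K → ∃ n, K ⊆ Q n := by
  obtain ⟨Q, hQ, hcofinal⟩ := hX
  exact ⟨accumulate Q, isCompact_accumulate hQ, monotone_accumulate,
    fun K hK => (hcofinal K hK).imp fun _ h => h.trans subset_accumulate⟩

def IsRegularOpen {X : Type*} [TopologicalSpace X] (V : Set X) : Prop :=
  interior (closure V) = V

namespace IsRegularOpen

variable {X : Type*} [TopologicalSpace X] {V : Set X}

theorem isOpen (hV : IsRegularOpen V) : IsOpen V :=
  hV ▸ isOpen_interior

theorem closure_compl_closure (hV : IsRegularOpen V) : closure (closure V)ᶜ = Vᶜ := by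
  rw [closure_compl, hV]

theorem interior_closure (s : Set X) : IsRegularOpen (interior (closure s)) :=
  (interior_mono (closure_minimal interior_subset isClosed_closure)).antisymm
    (interior_maximal subset_closure isOpen_interior)

end IsRegularOpen

theorem exists_isRegularOpen_superset_and_isCompact_closure {X : Type*} [TopologicalSpace X]
    [WeaklyLocallyCompactSpace X] [R1Space X] {K : Set X} (hK : IsCompact K) :
    ∃ V, IsRegularOpen V ∧ K ⊆ V ∧ IsCompact (closure V) := by
  obtain ⟨U, hU, hKU, hUc⟩ := exists_isOpen_superset_and_isCompact_closure hK
  refine ⟨interior (closure U), IsRegularOpen.interior_closure U,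
    hKU.trans (interior_maximal subset_closure hU), ?_⟩
  exact hUc.closure_of_subset interior_subset

theorem IsUsco.mem_of_mem_closure {X Y : Type*} [TopologicalSpace X] [TopologicalSpace Y]
    [T1Space Y] {G : X → Set Y} (hG : IsUsco G) {S : Set X} {y : Y} (hS : ∀ z ∈ S, y ∈ G z)
    {x : X} (hx : x ∈ closure S) : y ∈ G x := by
  by_contra hy
  obtain ⟨U, hU, hxU, hUG⟩ := hG.2.2 x {y}ᶜ isOpen_compl_singleton (fun _ h => by
    rintro rfl; exact hy h)
  obtain ⟨z, hzU, hzS⟩ := mem_closure_iff.1 hx U hU hxU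
  exact hUG z hzU (hS z hzS) rfl

section TwoValued

variable {X Y : Type*} [TopologicalSpace X] (a b : Y) {V : Set X} {x : X}

open Classical in
def twoValuedMap (V : Set X) : X → Set Y := fun x =>
  if x ∈ V then {a} else if x ∈ closure V then {a, b} else {b}

theorem twoValuedMap_of_mem (hx : x ∈ V) : twoValuedMap a b V x = {a} :=
  if_pos hx

theorem twoValuedMap_of_mem_frontier (hx : x ∈ closure V) (hx' : x ∉ V) :
    twoValuedMap a b V x = {a, b} := by
  rw [twoValuedMap, if_neg hx', if_pos hx]

theorem twoValuedMap_of_notMem_closure (hx : x ∉ closure V) : twoValuedMap a b V x = {b} := by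
  rw [twoValuedMap, if_neg (fun h => hx (subset_closure h)), if_neg hx]

theorem twoValuedMap_subset_pair : twoValuedMap a b V x ⊆ {a, b} := by
  unfold twoValuedMap
  split_ifs <;> simp

theorem mem_twoValuedMap_of_notMem (hx : x ∉ V) : b ∈ twoValuedMap a b V x := by
  by_cases hx' : x ∈ closure V
  · simp [twoValuedMap_of_mem_frontier a b hx' hx]
  · simp [twoValuedMap_of_notMem_closure a b hx']

theorem isUsco_twoValuedMap [TopologicalSpace Y] (hV : IsOpen V) : IsUsco (twoValuedMap a b V) := by
  refine ⟨fun x => ?_, fun x => ((toFinite _).subset (twoValuedMap_subset_pair a b)).isCompact,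
    fun x W hW hxW => ?_⟩
  · unfold twoValuedMap; split_ifs <;> simp
  by_cases hxV : x ∈ V
  · refine ⟨V, hV, hxV, fun z hz => ?_⟩
    rwa [twoValuedMap_of_mem a b hz, ← twoValuedMap_of_mem a b hxV]
  by_cases hx : x ∈ closure V
  · refine ⟨univ, isOpen_univ, mem_univ x, fun z _ => ?_⟩
    rw [twoValuedMap_of_mem_frontier a b hx hxV] at hxW
    exact (twoValuedMap_subset_pair a b).trans hxW
  · refine ⟨(closure V)ᶜ, isClosed_closure.isOpen_compl, hx, fun z hz => ?_⟩
    rwa [twoValuedMap_of_notMem_closure a b hz, ← twoValuedMap_of_notMem_closure a b hx]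

theorem isMinimalUsco_twoValuedMap [TopologicalSpace Y] [T1Space Y] (hV : IsRegularOpen V) :
    IsMinimalUsco (twoValuedMap a b V) := by
  refine ⟨isUsco_twoValuedMap a b hV.isOpen, fun G hG hGsub => funext fun x => ?_⟩
  have hsingleton {y : Y} {z : X} (h : twoValuedMap a b V z = {y}) : y ∈ G z := by
    obtain ⟨y', hy'⟩ := hG.1 z
    simpa [show y' = y by simpa [h] using hGsub z hy'] using hy'
  have ha : ∀ x ∈ closure V, a ∈ G x :=
    fun x => hG.mem_of_mem_closure fun z hz => hsingleton (twoValuedMap_of_mem a b hz)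
  have hb : ∀ x ∉ V, b ∈ G x := fun x hx =>
    hG.mem_of_mem_closure (fun z hz => hsingleton (twoValuedMap_of_notMem_closure a b hz))
      (hV.closure_compl_closure.symm ▸ hx)
  refine (hGsub x).antisymm fun y hy => ?_
  by_cases hxV : x ∈ V
  · rw [twoValuedMap_of_mem a b hxV, mem_singleton_iff.1 hy] at *
    exact ha x (subset_closure hxV)
  by_cases hx : x ∈ closure V
  · rw [twoValuedMap_of_mem_frontier a b hx hxV] at hy
    rcases hy with rfl | rfl
    exacts [ha x hx, hb x hxV]
  · rw [twoValuedMap_of_notMem_closure a b hx, mem_singleton_iff.1 hy] at *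
    exact hb x hxV

end TwoValued

theorem Metric.dist_le_hausdorffDist_singleton {Y : Type*} [PseudoMetricSpace Y] {s : Set Y}
    {a b : Y} (hs : Bornology.IsBounded s) (hb : b ∈ s) : dist a b ≤ hausdorffDist {a} s := by
  have := infDist_le_hausdorffDist_of_mem hb <|
    hausdorffEDist_ne_top_of_nonempty_of_bounded ⟨b, hb⟩ (singleton_nonempty a) hs
      Bornology.isBounded_singleton
  rwa [infDist_singleton, hausdorffDist_comm, dist_comm] at this

namespace MU

variable {X Y : Type*} [TopologicalSpace X] [MetricSpace Y]

def ofIsMinimalUsco (F : X → Set Y) (hF : IsMinimalUsco F) : MU X Y :=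
  ⟨UniformOnFun.ofFun _ fun x => ⟨⟨F x, hF.1.2.1 x⟩, hF.1.1 x⟩, hF⟩

@[simp]
theorem toFun_ofIsMinimalUsco (F : X → Set Y) (hF : IsMinimalUsco F) :
    (ofIsMinimalUsco F hF).toFun = F :=
  rfl

theorem uniformity_hasBasis :
    (uniformity (MU X Y)).HasBasis (fun Kε : Set X × ℝ => IsCompact Kε.1 ∧ 0 < Kε.2)
      fun Kε => {FG : MU X Y × MU X Y |
        ∀ x ∈ Kε.1, hausdorffDist (FG.1.toFun x) (FG.2.toFun x) < Kε.2} :=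
  (UniformOnFun.hasBasis_uniformity_of_basis X (NonemptyCompacts Y) {K : Set X | IsCompact K}
    ⟨∅, isCompact_empty⟩ (fun K hK L hL => ⟨K ∪ L, hK.union hL, subset_union_left,
      subset_union_right⟩) Metric.uniformity_basis_dist).comap _

theorem mem_closure_iff {A : Set (MU X Y)} {F : MU X Y} :
    F ∈ closure A ↔ ∀ K : Set X, IsCompact K → ∀ ε > 0,
      ∃ G ∈ A, ∀ x ∈ K, hausdorffDist (F.toFun x) (G.toFun x) < ε := by
  simp only [mem_closure_iff_nhds_basis (nhds_basis_uniformity' uniformity_hasBasis), Prod.forall,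
    and_imp, UniformSpace.ball, mem_preimage, mem_ofPred_eq]
  exact ⟨fun h K hK ε hε => h K ε hK hε, fun h K ε hK hε => h K hK ε hε⟩

instance : T2Space (MU X Y) :=
  have : T2Space (UniformOnFun X (NonemptyCompacts Y) {K : Set X | IsCompact K}) :=
    UniformOnFun.t2Space_of_covering <| sUnion_eq_univ_iff.2 fun x =>
      ⟨{x}, isCompact_singleton, rfl⟩
  inferInstanceAs (T2Space (Subtype _))

theorem metrizableSpace_of_hemicompact (hX : Hemicompact X) : MetrizableSpace (MU X Y) := by
  obtain ⟨Q, hQ, hmono, hcofinal⟩ := hX.exists_monotone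
  have : IsCountablyGenerated
      (uniformity (UniformOnFun X (NonemptyCompacts Y) {K : Set X | IsCompact K})) :=
    UniformOnFun.isCountablyGenerated_uniformity _ hQ hmono hcofinal
  have : IsCountablyGenerated (uniformity (MU X Y)) := Filter.comap.isCountablyGenerated _ _
  exact UniformSpace.metrizableSpace

theorem hemicompact_of_countablyTight [WeaklyLocallyCompactSpace X] [R1Space X] [Nontrivial Y]
    (h : CountablyTight (MU X Y)) : Hemicompact X := by
  obtain ⟨a, b, hab⟩ := exists_pair_ne Y
  let step (V : Set X) (hV : IsRegularOpen V) : MU X Y :=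
    ofIsMinimalUsco (twoValuedMap a b V) (isMinimalUsco_twoValuedMap a b hV)
  let A : Set (MU X Y) :=
    {F | ∃ V, IsRegularOpen V ∧ IsCompact (closure V) ∧ F.toFun = twoValuedMap a b V}
  -- `step univ` is the constant map `{a}`.
  have hconst : step univ (by simp [IsRegularOpen]) ∈ closure A := by
    refine mem_closure_iff.2 fun K hK ε hε => ?_
    obtain ⟨V, hV, hKV, hVc⟩ := exists_isRegularOpen_superset_and_isCompact_closure hK
    refine ⟨step V hV, ⟨V, hV, hVc, rfl⟩, fun x hx => ?_⟩
    simpa [step, twoValuedMap_of_mem a b (mem_univ x), twoValuedMap_of_mem a b (hKV hx)] using hε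
  obtain ⟨B, hBA, hB, hconstB⟩ := h A _ hconst
  choose V _ hVc hFV using fun F : B => hBA F.2
  have : Countable B := hB.to_subtype
  refine hemicompact_of_countable (countable_range fun F => closure (V F))
    (forall_mem_range.2 hVc) fun K hK => ?_
  obtain ⟨F, hFB, hF⟩ := mem_closure_iff.1 hconstB K hK (dist a b) (dist_pos.2 hab)
  refine ⟨closure (V ⟨F, hFB⟩), mem_range_self _, fun x hx => subset_closure ?_⟩
  by_contra hxV
  have hfar := dist_le_hausdorffDist_singleton (a := a)
    ((toFinite _).subset (twoValuedMap_subset_pair a b)).isBounded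
    (mem_twoValuedMap_of_notMem a b hxV)
  have hnear := hF x hx
  simp only [step, toFun_ofIsMinimalUsco, twoValuedMap_of_mem a b (mem_univ x),
    hFV ⟨F, hFB⟩] at hnear
  exact hfar.not_gt hnear

end MU

/-- The following are equivalent: `MU(X,Y)` is metrizable / first countable / Fréchet-Urysohn /
sequential / of countable tightness, and `X` is hemicompact. -/
theorem statement17 {X Y : Type*} [TopologicalSpace X] [T2Space X] [LocallyCompactSpace X]
    [MetricSpace Y] [Nontrivial Y] :
    (MetrizableSpace (MU X Y) ↔ Hemicompact X) ∧
    (FirstCountableTopology (MU X Y) ↔ Hemicompact X) ∧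
    (FrechetUrysohnSpace (MU X Y) ↔ Hemicompact X) ∧
    (SequentialSpace (MU X Y) ↔ Hemicompact X) ∧
    (tightnessCard (MU X Y) = Cardinal.aleph0 ↔ Hemicompact X) := by
  have hmet : Hemicompact X → MetrizableSpace (MU X Y) := MU.metrizableSpace_of_hemicompact
  have htight : CountablyTight (MU X Y) → Hemicompact X := MU.hemicompact_of_countablyTight
  have hseq : SequentialSpace (MU X Y) → Hemicompact X := fun _ =>
    htight SequentialSpace.countablyTight
  refine ⟨⟨fun _ => hseq inferInstance, hmet⟩, ⟨fun _ => hseq inferInstance, fun h => ?_⟩,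
    ⟨fun _ => hseq inferInstance, fun h => ?_⟩, ⟨hseq, fun h => ?_⟩,
    tightnessCard_eq_aleph0_iff.trans ⟨htight, fun h => ?_⟩⟩ <;> have := hmet h
  exacts [inferInstance, inferInstance, inferInstance, SequentialSpace.countablyTight]
end
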